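/- arXiv:1801.01980 — 14 statements merged into one kernel-verified Lean document; each statement's English description precedes it below -/
import Mathlib

section
/- Suppose S ⊆ {1,…,C} is schedulable. Then for every i ∈ {1,…,C}, Y · |S ∩ {1,…,i}| ≤ R(d(i)). (Necessity of the forward-scan condition: the total data of all fetched chunks among the first i must be delivered by the i-th deadline.) -/
/-- A set `S ⊆ {1,…,C}` of chunks is schedulable: there is a nonnegative allocation
`z i j` of bandwidth so that chunks outside `S` (or past their deadline) get nothing,
the per-slot bandwidth budget `B j` is respected, and every chunk of `S` receives
exactly `Y` units of data by its deadline `d i`. -/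
def Schedulable (C : ℕ) (Y : ℝ) (B : ℕ → ℝ) (d : ℕ → ℕ) (S : Finset ℕ) : Prop :=
  ∃ z : ℕ → ℕ → ℝ,
    (∀ i j, 0 ≤ z i j) ∧
    (∀ i j, (i ∉ S ∨ d i < j) → z i j = 0) ∧
    (∀ j, 1 ≤ j → ∑ i ∈ Finset.Icc 1 C, z i j ≤ B j) ∧
    (∀ i ∈ S, ∑ j ∈ Finset.Icc 1 (d i), z i j = Y)

/-- Necessity of the forward-scan condition: if `S` is schedulable, then for each
`i ∈ {1,…,C}`, the total data `Y · |S ∩ {1,…,i}|` of the fetched chunks among the first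
`i` chunks is at most the cumulative bandwidth `R(d(i)) = ∑_{j=1}^{d(i)} B(j)`. -/
theorem forward_scan_necessary
    (C : ℕ) (hC : 1 ≤ C) (Y : ℝ) (hY : 0 < Y)
    (B : ℕ → ℝ) (hB : ∀ j, 1 ≤ j → 0 ≤ B j)
    (d : ℕ → ℕ)
    (hd1 : ∀ i, 1 ≤ i → i ≤ C → 1 ≤ d i)
    (hdmono : ∀ i i', 1 ≤ i → i < i' → i' ≤ C → d i < d i')
    (S : Finset ℕ) (hS : S ⊆ Finset.Icc 1 C)
    (hsched : Schedulable C Y B d S) :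
    ∀ i ∈ Finset.Icc 1 C,
      Y * ((S ∩ Finset.Icc 1 i).card : ℝ) ≤ ∑ j ∈ Finset.Icc 1 (d i), B j := by
  obtain ⟨z, hz0, hzz, hzB, hzY⟩ := hsched
  intro i hi
  rw [Finset.mem_Icc] at hi
  have hdk : ∀ k ∈ S ∩ Finset.Icc 1 i, d k ≤ d i := by
    intro k hk
    rw [Finset.mem_inter, Finset.mem_Icc] at hk
    rcases lt_or_eq_of_le hk.2.2 with h | h
    · exact le_of_lt (hdmono k i hk.2.1 h hi.2)
    · exact h ▸ le_refl _
  -- step 1: Y * card = sum over k of Y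
  have h1 : Y * ((S ∩ Finset.Icc 1 i).card : ℝ)
      = ∑ k ∈ S ∩ Finset.Icc 1 i, ∑ j ∈ Finset.Icc 1 (d i), z k j := by
    have : ∀ k ∈ S ∩ Finset.Icc 1 i, ∑ j ∈ Finset.Icc 1 (d i), z k j = Y := by
      intro k hk
      have hkS : (k : ℕ) ∈ S := (Finset.mem_inter.mp hk).1
      rw [← hzY k hkS]
      refine (Finset.sum_subset (Finset.Icc_subset_Icc_right (hdk k hk)) ?_).symm
      intro j hj hj'
      rw [Finset.mem_Icc] at hj
      rw [Finset.mem_Icc, not_and_or, not_le, not_le] at hj'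
      rcases hj' with h | h
      · omega
      · exact hzz _ _ (Or.inr h)
    rw [Finset.sum_congr rfl this, Finset.sum_const, nsmul_eq_mul, mul_comm]
  rw [h1, Finset.sum_comm]
  refine Finset.sum_le_sum ?_
  intro j hj
  rw [Finset.mem_Icc] at hj
  refine le_trans ?_ (hzB j hj.1)
  refine Finset.sum_le_sum_of_subset_of_nonneg ?_ (fun k _ _ => hz0 k j)
  intro k hk
  exact hS (Finset.mem_inter.mp hk).1
end

section
/- Suppose S ⊆ {1,…,C} satisfies Y · |S ∩ {1,…,i}| ≤ R(d(i)) for every i ∈ {1,…,C}. Then S is schedulable. (Sufficiency of the forward-scan prefix condition: an earliest-deadline-first allocation delivers every chunk of S by its deadline.) -/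
lemma clamp_diff (a b x y : ℝ) (hab : a ≤ b) (hxy : x ≤ y) :
    max a (min b y) - max a (min b x) = max 0 (min b y - max a x) := by
  simp only [max_def, min_def]
  split_ifs <;> linarith

lemma telescope_Icc (F : ℕ → ℝ) (n : ℕ) :
    ∑ k ∈ Finset.Icc 1 n, (F k - F (k - 1)) = F n - F 0 := by
  induction n with
  | zero => simp
  | succ n ih =>
    rw [Finset.sum_Icc_succ_top (by omega : 1 ≤ n + 1), ih]
    simp


/-- Sufficiency of the forward-scan prefix condition: if for every `i ∈ {1,…,C}` the
total data `Y · |S ∩ {1,…,i}|` is at most the cumulative bandwidth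
`R(d(i)) = ∑_{j=1}^{d(i)} B(j)`, then `S` is schedulable (an earliest-deadline-first
allocation delivers every chunk of `S` by its deadline). -/
theorem forward_scan_sufficient
    (C : ℕ) (hC : 1 ≤ C) (Y : ℝ) (hY : 0 < Y)
    (B : ℕ → ℝ) (hB : ∀ j, 1 ≤ j → 0 ≤ B j)
    (d : ℕ → ℕ)
    (hd1 : ∀ i, 1 ≤ i → i ≤ C → 1 ≤ d i)
    (hdmono : ∀ i i', 1 ≤ i → i < i' → i' ≤ C → d i < d i')
    (S : Finset ℕ) (hS : S ⊆ Finset.Icc 1 C)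
    (hpre : ∀ i ∈ Finset.Icc 1 C,
      Y * ((S ∩ Finset.Icc 1 i).card : ℝ) ≤ ∑ j ∈ Finset.Icc 1 (d i), B j) :
    Schedulable C Y B d S := by
  classical
  -- cumulative bandwidth
  set R : ℕ → ℝ := fun t => ∑ j ∈ Finset.Icc 1 t, B j with hRdef
  -- rank of chunk i
  set r : ℕ → ℕ := fun i => (S ∩ Finset.Icc 1 i).card with hrdef
  have hR0 : R 0 = 0 := by simp [hRdef]
  have hRnonneg : ∀ t, 0 ≤ R t := by
    intro t
    exact Finset.sum_nonneg fun j hj => hB j (Finset.mem_Icc.mp hj).1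
  have hRmono : ∀ {m t : ℕ}, m ≤ t → R m ≤ R t := by
    intro m t hmt
    apply Finset.sum_le_sum_of_subset_of_nonneg
    · exact Finset.Icc_subset_Icc_right hmt
    · intro j hj _; exact hB j (Finset.mem_Icc.mp hj).1
  have hRstep : ∀ j, 1 ≤ j → R j = R (j - 1) + B j := by
    intro j hj
    obtain ⟨m, rfl⟩ : ∃ m, j = m + 1 := ⟨j - 1, by omega⟩
    simp only [hRdef, Nat.add_sub_cancel]
    rw [Finset.sum_Icc_succ_top (by omega : 1 ≤ m + 1)]
  -- rank facts
  have hr1 : ∀ i ∈ S, 1 ≤ r i := by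
    intro i hi
    have hi1 : 1 ≤ i := (Finset.mem_Icc.mp (hS hi)).1
    have : i ∈ S ∩ Finset.Icc 1 i := by
      simp [Finset.mem_inter, hi, Finset.mem_Icc, hi1]
    exact Finset.card_pos.mpr ⟨i, this⟩
  have hrle : ∀ i, r i ≤ S.card := fun i =>
    Finset.card_le_card Finset.inter_subset_left
  have hrmono : ∀ i ∈ S, ∀ i' ∈ S, i < i' → r i < r i' := by
    intro i hi i' hi' hlt
    have h1 : insert i' (S ∩ Finset.Icc 1 i) ⊆ S ∩ Finset.Icc 1 i' := by
      intro x hx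
      rcases Finset.mem_insert.mp hx with rfl | hx
      · exact Finset.mem_inter.mpr ⟨hi', Finset.mem_Icc.mpr
          ⟨(Finset.mem_Icc.mp (hS hi')).1, le_refl _⟩⟩
      · obtain ⟨hxS, hxI⟩ := Finset.mem_inter.mp hx
        obtain ⟨hx1, hx2⟩ := Finset.mem_Icc.mp hxI
        exact Finset.mem_inter.mpr ⟨hxS, Finset.mem_Icc.mpr ⟨hx1, by omega⟩⟩
    have h2 : i' ∉ S ∩ Finset.Icc 1 i := by
      simp only [Finset.mem_inter, Finset.mem_Icc]
      rintro ⟨-, -, h⟩; omega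
    calc r i < (insert i' (S ∩ Finset.Icc 1 i)).card := by
            rw [Finset.card_insert_of_notMem h2]; exact Nat.lt_succ_self _
      _ ≤ r i' := Finset.card_le_card h1
  have hrinj : Set.InjOn r S := by
    intro a ha b hb hab
    by_contra hne
    rcases lt_or_gt_of_ne hne with h | h
    · exact absurd hab (hrmono a ha b hb h).ne
    · exact absurd hab.symm (hrmono b hb a ha h).ne
  -- the allocation
  refine ⟨fun i j => if i ∈ S then
      max 0 (min (R j) (Y * (r i : ℝ)) - max (R (j - 1)) (Y * ((r i : ℝ) - 1)))
    else 0, ?_, ?_, ?_, ?_⟩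
  · intro i j
    by_cases hi : i ∈ S <;> simp [hi]
  · -- zero outside S or past deadline
    intro i j hij
    rcases hij with hi | hij
    · simp [hi]
    by_cases hi : i ∈ S
    · simp only [hi, if_true]
      have hi1 : 1 ≤ i := (Finset.mem_Icc.mp (hS hi)).1
      have hiC : i ≤ C := (Finset.mem_Icc.mp (hS hi)).2
      have hdi : 1 ≤ d i := hd1 i hi1 hiC
      have hRdi : Y * (r i : ℝ) ≤ R (d i) := hpre i (hS hi)
      have hRj : R (d i) ≤ R (j - 1) := hRmono (by omega)
      have : min (R j) (Y * (r i : ℝ)) - max (R (j - 1)) (Y * ((r i : ℝ) - 1)) ≤ 0 := by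
        have h1 : min (R j) (Y * (r i : ℝ)) ≤ Y * (r i : ℝ) := min_le_right _ _
        have h2 : R (j - 1) ≤ max (R (j - 1)) (Y * ((r i : ℝ) - 1)) := le_max_left _ _
        linarith
      exact max_eq_left this
    · simp [hi]
  · -- budget constraint
    intro j hj
    have hzero : ∀ i ∈ Finset.Icc 1 C, i ∉ S →
        (if i ∈ S then
          max 0 (min (R j) (Y * (r i : ℝ)) - max (R (j - 1)) (Y * ((r i : ℝ) - 1)))
        else 0) = 0 := by
      intro i _ hi; simp [hi]
    rw [← Finset.sum_subset hS hzero]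
    set F : ℕ → ℝ := fun k => max (R (j - 1)) (min (R j) (Y * (k : ℝ))) with hFdef
    have hterm : ∀ i ∈ S,
        (if i ∈ S then
          max 0 (min (R j) (Y * (r i : ℝ)) - max (R (j - 1)) (Y * ((r i : ℝ) - 1)))
        else 0) = F (r i) - F (r i - 1) := by
      intro i hi
      have hri : 1 ≤ r i := hr1 i hi
      have hcast : ((r i - 1 : ℕ) : ℝ) = (r i : ℝ) - 1 := by
        push_cast [hri]; ring
      simp only [hi, if_true, hFdef, hcast]
      rw [clamp_diff (R (j - 1)) (R j) (Y * ((r i : ℝ) - 1)) (Y * (r i : ℝ))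
        (hRmono (by omega)) (by nlinarith)]
    rw [Finset.sum_congr rfl hterm]
    have himage : S.image r = Finset.Icc 1 S.card := by
      apply Finset.eq_of_subset_of_card_le
      · intro k hk
        obtain ⟨i, hi, rfl⟩ := Finset.mem_image.mp hk
        exact Finset.mem_Icc.mpr ⟨hr1 i hi, hrle i⟩
      · rw [Finset.card_image_of_injOn hrinj, Nat.card_Icc]
        omega
    rw [← Finset.sum_image (f := fun k => F k - F (k - 1))
      (fun a ha b hb hab => hrinj ha hb hab), himage, telescope_Icc]
    have hF0 : F 0 = R (j - 1) := by
      simp only [hFdef, Nat.cast_zero, mul_zero]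
      rw [min_eq_right (hRnonneg j), max_eq_left (hRnonneg (j - 1))]
    have hFn : F S.card ≤ R j := max_le (hRmono (by omega)) (min_le_left _ _)
    have := hRstep j hj
    rw [hF0]
    linarith
  · -- delivery constraint
    intro i hi
    have hi1 : 1 ≤ i := (Finset.mem_Icc.mp (hS hi)).1
    have hiC : i ≤ C := (Finset.mem_Icc.mp (hS hi)).2
    have hri : 1 ≤ r i := hr1 i hi
    have hri' : (1 : ℝ) ≤ (r i : ℝ) := by exact_mod_cast hri
    set G : ℕ → ℝ := fun t => max (Y * ((r i : ℝ) - 1)) (min (Y * (r i : ℝ)) (R t))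
      with hGdef
    have hterm : ∀ j ∈ Finset.Icc 1 (d i),
        (if i ∈ S then
          max 0 (min (R j) (Y * (r i : ℝ)) - max (R (j - 1)) (Y * ((r i : ℝ) - 1)))
        else 0) = G j - G (j - 1) := by
      intro j hj
      obtain ⟨hj1, hj2⟩ := Finset.mem_Icc.mp hj
      simp only [hi, if_true, hGdef]
      rw [min_comm (R j) (Y * (r i : ℝ)), max_comm (R (j - 1)) (Y * ((r i : ℝ) - 1))]
      exact (clamp_diff (Y * ((r i : ℝ) - 1)) (Y * (r i : ℝ)) (R (j - 1)) (R j)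
        (by nlinarith) (hRmono (by omega))).symm
    rw [Finset.sum_congr rfl hterm, telescope_Icc]
    have hG0 : G 0 = Y * ((r i : ℝ) - 1) := by
      simp only [hGdef, hR0]
      rw [min_eq_right (by nlinarith), max_eq_left (by nlinarith)]
    have hGd : G (d i) = Y * (r i : ℝ) := by
      have hRdi : Y * (r i : ℝ) ≤ R (d i) := hpre i (hS hi)
      simp only [hGdef]
      rw [min_eq_left hRdi, max_eq_right (by nlinarith)]
    rw [hG0, hGd]; ring
end

section
/- Let A = max_{1 ≤ i ≤ C} max(0, i − ⌊R(d(i))/Y⌋). Then the maximum cardinality of a schedulable subset of {1,…,C} equals C − A; in particular the greedy choice S = {A+1,…,C}, which skips exactly the first A chunks, is schedulable and achieves the minimum possible number of skipped chunks (this is the single-link content of Lemma 1 of the paper). -/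
/-- Length of the overlap of intervals `[a,b]` and `[s,t]`, written two ways. -/
lemma overlap_eq (a b s t : ℝ) (hab : a ≤ b) (hst : s ≤ t) :
    max 0 (min b t - max a s) = min b (max a t) - min b (max a s) := by
  rcases le_total b t with h1 | h1 <;> rcases le_total a s with h2 | h2 <;>
    rcases le_total a t with h3 | h3 <;> rcases le_total b s with h4 | h4 <;>
      simp only [min_def, max_def] <;> split_ifs <;> linarith

lemma tele1 (F : ℕ → ℝ) (N : ℕ) :
    ∑ j ∈ Finset.Icc 1 N, (F j - F (j - 1)) = F N - F 0 := by
  induction N with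
  | zero => simp
  | succ n ih =>
    rw [Finset.sum_Icc_succ_top (by omega), ih]
    simp only [Nat.add_sub_cancel]
    ring

lemma tele2 (F : ℕ → ℝ) (m n : ℕ) (h : m ≤ n + 1) :
    ∑ i ∈ Finset.Icc m n, (F (i + 1) - F i) = F (n + 1) - F m := by
  induction n with
  | zero =>
    interval_cases m
    · simp
    · simp
  | succ n ih =>
    rcases le_or_gt m (n + 1) with h' | h'
    · rw [Finset.sum_Icc_succ_top h', ih h']
      ring
    · have : m = n + 2 := by omega
      subst this
      simp

/-- Single-link content of Lemma 1: with
`A = max_{1≤i≤C} max(0, i − ⌊R(d(i))/Y⌋)` (where `R(t) = ∑_{j=1}^t B j` and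
natural subtraction realizes `max(0,·)`), the maximum cardinality of a schedulable
subset of `{1,…,C}` equals `C − A`, and the prefix-skip set `{A+1,…,C}`, which skips
exactly the first `A` chunks, is schedulable and attains the maximum. -/
theorem min_skips_eq_A
    (C : ℕ) (hC : 1 ≤ C) (Y : ℝ) (hY : 0 < Y)
    (B : ℕ → ℝ) (hB : ∀ j, 1 ≤ j → 0 ≤ B j)
    (d : ℕ → ℕ)
    (hd1 : ∀ i, 1 ≤ i → i ≤ C → 1 ≤ d i)
    (hdmono : ∀ i i', 1 ≤ i → i < i' → i' ≤ C → d i < d i')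
    (A : ℕ)
    (hA : A = (Finset.Icc 1 C).sup
      (fun i => i - ⌊(∑ j ∈ Finset.Icc 1 (d i), B j) / Y⌋₊)) :
    Schedulable C Y B d (Finset.Icc (A + 1) C) ∧
    IsGreatest {n : ℕ | ∃ S : Finset ℕ, S ⊆ Finset.Icc 1 C ∧
        Schedulable C Y B d S ∧ S.card = n} (C - A) := by
  set R : ℕ → ℝ := fun t => ∑ j ∈ Finset.Icc 1 t, B j with hR
  have hRnn : ∀ t, 0 ≤ R t := fun t =>
    Finset.sum_nonneg fun j hj => hB j (Finset.mem_Icc.mp hj).1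
  have hRmono : ∀ s t, s ≤ t → R s ≤ R t := by
    intro s t hst
    apply Finset.sum_le_sum_of_subset_of_nonneg (Finset.Icc_subset_Icc le_rfl hst)
    intro j hj _; exact hB j (Finset.mem_Icc.mp hj).1
  have hRsucc : ∀ j, 1 ≤ j → R j = R (j - 1) + B j := by
    intro j hj
    obtain ⟨k, rfl⟩ : ∃ k, j = k + 1 := ⟨j - 1, by omega⟩
    simp only [hR, Nat.add_sub_cancel]
    rw [Finset.sum_Icc_succ_top (by omega)]
  have key : ∀ i, A + 1 ≤ i → i ≤ C → ((i : ℝ) - A) * Y ≤ R (d i) := by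
    intro i h1 h2
    have hfl : i - ⌊R (d i) / Y⌋₊ ≤ A := by
      rw [hA]
      simpa only [hR] using Finset.le_sup
        (f := fun i => i - ⌊(∑ j ∈ Finset.Icc 1 (d i), B j) / Y⌋₊)
        (Finset.mem_Icc.mpr ⟨by omega, h2⟩)
    have hAi : A ≤ i := by omega
    have h3 : i - A ≤ ⌊R (d i) / Y⌋₊ := by omega
    have h4 : ((i : ℝ) - A) ≤ (⌊R (d i) / Y⌋₊ : ℝ) := by
      rw [← Nat.cast_sub hAi]
      exact_mod_cast h3
    have h5 : (⌊R (d i) / Y⌋₊ : ℝ) ≤ R (d i) / Y :=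
      Nat.floor_le (div_nonneg (hRnn _) hY.le)
    calc ((i : ℝ) - A) * Y ≤ (R (d i) / Y) * Y :=
          mul_le_mul_of_nonneg_right (h4.trans h5) hY.le
      _ = R (d i) := by field_simp
  have hAC : A ≤ C := by
    rw [hA]
    apply Finset.sup_le
    intro i hi
    have := (Finset.mem_Icc.mp hi).2
    omega
  have hsched : Schedulable C Y B d (Finset.Icc (A + 1) C) := by
    set z : ℕ → ℕ → ℝ := fun i j => if A + 1 ≤ i ∧ i ≤ C then
      max 0 (min (((i : ℝ) - A) * Y) (R j) - max (((i : ℝ) - A - 1) * Y) (R (j - 1)))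
      else 0 with hz
    refine ⟨z, ?_, ?_, ?_, ?_⟩
    · intro i j
      simp only [hz]
      split
      · exact le_max_left _ _
      · exact le_rfl
    · intro i j hij
      rcases hij with h | h
      · simp only [hz]
        rw [if_neg]
        intro ⟨h1, h2⟩
        exact h (Finset.mem_Icc.mpr ⟨h1, h2⟩)
      · simp only [hz]
        split
        next hi =>
          obtain ⟨h1, h2⟩ := hi
          have hb : ((i : ℝ) - A) * Y ≤ R (j - 1) :=
            (key i h1 h2).trans (hRmono _ _ (by omega))
          have hle : min (((i : ℝ) - A) * Y) (R j) ≤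
              max (((i : ℝ) - A - 1) * Y) (R (j - 1)) :=
            le_trans (min_le_left _ _) (hb.trans (le_max_right _ _))
          exact max_eq_left (by linarith)
        next => rfl
    · intro j hj
      set F : ℕ → ℝ := fun k => min (R j) (max (R (j - 1)) (((k : ℝ) - A - 1) * Y))
        with hF
      have hst : R (j - 1) ≤ R j := by
        rw [hRsucc j hj]; linarith [hB j hj]
      have hstep : ∀ i ∈ Finset.Icc (A + 1) C, z i j = F (i + 1) - F i := by
        intro i hi
        obtain ⟨h1, h2⟩ := Finset.mem_Icc.mp hi
        have hab : ((i : ℝ) - A - 1) * Y ≤ ((i : ℝ) - A) * Y := by nlinarith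
        simp only [hz, if_pos (And.intro h1 h2)]
        rw [min_comm (((i : ℝ) - A) * Y) (R j),
            max_comm (((i : ℝ) - A - 1) * Y) (R (j - 1)),
            overlap_eq (R (j - 1)) (R j) (((i : ℝ) - A - 1) * Y) (((i : ℝ) - A) * Y)
              hst hab]
        have hcast : ((i + 1 : ℕ) : ℝ) - A - 1 = (i : ℝ) - A := by push_cast; ring
        simp only [hF, hcast]
      calc ∑ i ∈ Finset.Icc 1 C, z i j = ∑ i ∈ Finset.Icc (A + 1) C, z i j := by
            symm
            apply Finset.sum_subset (Finset.Icc_subset_Icc (by omega) le_rfl)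
            intro x hx hnx
            simp only [hz]
            rw [if_neg]
            intro ⟨hx1, hx2⟩
            exact hnx (Finset.mem_Icc.mpr ⟨hx1, hx2⟩)
        _ = F (C + 1) - F (A + 1) := by
            rw [Finset.sum_congr rfl hstep]
            exact tele2 F (A + 1) C (by omega)
        _ ≤ B j := by
            have h1 : F (C + 1) ≤ R j := min_le_left _ _
            have h2 : F (A + 1) = R (j - 1) := by
              have hcast : ((A + 1 : ℕ) : ℝ) - A - 1 = 0 := by push_cast; ring
              simp only [hF, hcast, zero_mul]
              rw [max_eq_left (hRnn _), min_eq_right hst]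
            have := hRsucc j hj
            linarith
    · intro i hi
      obtain ⟨h1, h2⟩ := Finset.mem_Icc.mp hi
      have hab : ((i : ℝ) - A - 1) * Y ≤ ((i : ℝ) - A) * Y := by nlinarith
      have hiA : (A : ℝ) + 1 ≤ (i : ℝ) := by exact_mod_cast h1
      have ha0 : 0 ≤ ((i : ℝ) - A - 1) * Y := mul_nonneg (by linarith) hY.le
      set G : ℕ → ℝ := fun k =>
        min (((i : ℝ) - A) * Y) (max (((i : ℝ) - A - 1) * Y) (R k)) with hG
      have hstep : ∀ j ∈ Finset.Icc 1 (d i), z i j = G j - G (j - 1) := by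
        intro j hj
        have hj1 := (Finset.mem_Icc.mp hj).1
        have hst : R (j - 1) ≤ R j := by
          rw [hRsucc j hj1]; linarith [hB j hj1]
        simp only [hz, if_pos (And.intro h1 h2), hG]
        exact overlap_eq (((i : ℝ) - A - 1) * Y) (((i : ℝ) - A) * Y)
          (R (j - 1)) (R j) hab hst
      rw [Finset.sum_congr rfl hstep, tele1 G (d i)]
      have hG1 : G (d i) = ((i : ℝ) - A) * Y := by
        have hb : ((i : ℝ) - A) * Y ≤ max (((i : ℝ) - A - 1) * Y) (R (d i)) :=
          le_trans (key i h1 h2) (le_max_right _ _)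
        exact min_eq_left hb
      have hG0 : G 0 = ((i : ℝ) - A - 1) * Y := by
        have hR0 : R 0 = 0 := by simp [hR]
        simp only [hG, hR0]
        rw [max_eq_left ha0, min_eq_right hab]
      rw [hG1, hG0]
      ring
  refine ⟨hsched, ⟨⟨Finset.Icc (A + 1) C, Finset.Icc_subset_Icc (by omega) le_rfl,
    hsched, ?_⟩, ?_⟩⟩
  · rw [Nat.card_Icc]; omega
  · rintro n ⟨S, hS, ⟨z, hz0, hzz, hzb, hzY⟩, rfl⟩
    obtain ⟨i0, hi0mem, hi0⟩ := Finset.exists_mem_eq_sup _ (Finset.nonempty_Icc.mpr hC)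
      (fun i => i - ⌊(∑ j ∈ Finset.Icc 1 (d i), B j) / Y⌋₊)
    obtain ⟨hi01, hi0C⟩ := Finset.mem_Icc.mp hi0mem
    set T := S ∩ Finset.Icc 1 i0 with hT
    have hTY : ∀ k ∈ T, ∑ j ∈ Finset.Icc 1 (d i0), z k j = Y := by
      intro k hk
      obtain ⟨hkS, hk2⟩ := Finset.mem_inter.mp hk
      obtain ⟨hk1, hki0⟩ := Finset.mem_Icc.mp hk2
      have hdk : d k ≤ d i0 := by
        rcases eq_or_lt_of_le hki0 with h | h
        · rw [h]
        · exact (hdmono k i0 hk1 h hi0C).le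
      rw [← hzY k hkS]
      symm
      apply Finset.sum_subset (Finset.Icc_subset_Icc le_rfl hdk)
      intro x hx hnx
      apply hzz
      right
      have h1 := Finset.mem_Icc.mp hx
      simp only [Finset.mem_Icc] at hnx
      omega
    have hcard : (T.card : ℝ) * Y ≤ R (d i0) := by
      calc (T.card : ℝ) * Y = ∑ k ∈ T, ∑ j ∈ Finset.Icc 1 (d i0), z k j := by
            rw [Finset.sum_congr rfl hTY, Finset.sum_const, nsmul_eq_mul]
        _ ≤ ∑ k ∈ Finset.Icc 1 C, ∑ j ∈ Finset.Icc 1 (d i0), z k j := by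
            apply Finset.sum_le_sum_of_subset_of_nonneg
            · intro x hx
              exact hS (Finset.mem_inter.mp hx).1
            · intro k _ _
              exact Finset.sum_nonneg fun j _ => hz0 k j
        _ = ∑ j ∈ Finset.Icc 1 (d i0), ∑ k ∈ Finset.Icc 1 C, z k j := Finset.sum_comm
        _ ≤ ∑ j ∈ Finset.Icc 1 (d i0), B j :=
            Finset.sum_le_sum fun j hj => hzb j (Finset.mem_Icc.mp hj).1
    have hfloor : T.card ≤ ⌊R (d i0) / Y⌋₊ := by
      apply Nat.le_floor
      rw [le_div_iff₀ hY]
      exact hcard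
    have hsplit : (S ∩ Finset.Icc 1 i0).card + (S \ Finset.Icc 1 i0).card = S.card :=
      Finset.card_inter_add_card_sdiff S _
    have hrest : (S \ Finset.Icc 1 i0).card ≤ C - i0 := by
      have hsub : S \ Finset.Icc 1 i0 ⊆ Finset.Icc (i0 + 1) C := by
        intro x hx
        obtain ⟨hxS, hxn⟩ := Finset.mem_sdiff.mp hx
        have h1 := Finset.mem_Icc.mp (hS hxS)
        simp only [Finset.mem_Icc] at hxn ⊢
        omega
      calc _ ≤ (Finset.Icc (i0 + 1) C).card := Finset.card_le_card hsub
        _ = C - i0 := by rw [Nat.card_Icc]; omega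
    have hSC : S.card ≤ C := by
      calc S.card ≤ (Finset.Icc 1 C).card := Finset.card_le_card hS
        _ = C := by rw [Nat.card_Icc]; omega
    have hAe : A = i0 - ⌊R (d i0) / Y⌋₊ := by
      rw [hA, hi0]
    rw [← hT] at hsplit
    omega
end

section
/- Let A be an integer with 0 ≤ A ≤ C and suppose some set S ⊆ {1,…,C} with |S| = C − A is schedulable. Then the prefix-skip set {A+1,…,C} is also schedulable. (Skipping the earliest chunks is always feasible whenever any choice of the same number of skips is feasible.) -/
/-- Skipping the earliest chunks is always feasible whenever any choice of the same
number of skips is feasible: if some `S ⊆ {1,…,C}` with `|S| = C − A` is schedulable,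
then the prefix-skip set `{A+1,…,C}` is also schedulable. -/
theorem prefix_skip_schedulable
    (C : ℕ) (hC : 1 ≤ C) (Y : ℝ) (hY : 0 < Y)
    (B : ℕ → ℝ) (hB : ∀ j, 1 ≤ j → 0 ≤ B j)
    (d : ℕ → ℕ)
    (hd1 : ∀ i, 1 ≤ i → i ≤ C → 1 ≤ d i)
    (hdmono : ∀ i i', 1 ≤ i → i < i' → i' ≤ C → d i < d i')
    (A : ℕ) (hAC : A ≤ C)
    (S : Finset ℕ) (hS : S ⊆ Finset.Icc 1 C) (hcard : S.card = C - A)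
    (hsched : Schedulable C Y B d S) :
    Schedulable C Y B d (Finset.Icc (A + 1) C) := by
  unfold Schedulable at hsched ⊢
  classical
  obtain ⟨z, hz0, hzz, hzB, hzY⟩ := hsched
  set n := C - A with hn
  have hScard : S.card = n := hcard
  set g : Fin n → ℕ := fun k => S.orderEmbOfFin hScard k with hg
  have hgS : ∀ k, g k ∈ S := fun k => S.orderEmbOfFin_mem hScard k
  have hginj : Function.Injective g := (S.orderEmbOfFin hScard).injective
  have hgmono : StrictMono g := (S.orderEmbOfFin hScard).strictMono
  have hg1 : ∀ k, 1 ≤ g k ∧ g k ≤ C := by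
    intro k
    have := hS (hgS k)
    rw [Finset.mem_Icc] at this
    exact this
  -- key bound: g k ≤ A + 1 + k
  have key : ∀ k : Fin n, g k ≤ A + 1 + k := by
    intro k
    have hsub : (Finset.Ici k).image g ⊆ Finset.Icc (g k) C := by
      intro x hx
      rw [Finset.mem_image] at hx
      obtain ⟨m, hm, rfl⟩ := hx
      rw [Finset.mem_Ici] at hm
      exact Finset.mem_Icc.2 ⟨hgmono.monotone hm, (hg1 m).2⟩
    have hcard1 : ((Finset.Ici k).image g).card = n - k := by
      rw [Finset.card_image_of_injective _ hginj, Fin.card_Ici]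
    have hcard2 := Finset.card_le_card hsub
    rw [hcard1, Nat.card_Icc] at hcard2
    have h1 := (hg1 k).1
    have h2 := k.isLt
    omega
  -- the witness index map
  set w : ℕ → ℕ := fun i => if h : i - (A + 1) < n then g ⟨i - (A + 1), h⟩ else 0 with hw
  have hwval : ∀ i, A + 1 ≤ i → i ≤ C → ∃ h : i - (A + 1) < n,
      w i = g ⟨i - (A + 1), h⟩ := by
    intro i h1 h2
    have h : i - (A + 1) < n := by omega
    exact ⟨h, dif_pos h⟩
  have hwS : ∀ i, A + 1 ≤ i → i ≤ C → w i ∈ S := by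
    intro i h1 h2
    obtain ⟨h, hval⟩ := hwval i h1 h2
    rw [hval]; exact hgS _
  have hwle : ∀ i, A + 1 ≤ i → i ≤ C → w i ≤ i := by
    intro i h1 h2
    obtain ⟨h, hval⟩ := hwval i h1 h2
    rw [hval]
    have hk := key ⟨i - (A + 1), h⟩
    simp only [Fin.val_mk] at hk
    omega
  have hwd : ∀ i, A + 1 ≤ i → i ≤ C → d (w i) ≤ d i := by
    intro i h1 h2
    rcases eq_or_lt_of_le (hwle i h1 h2) with h | h
    · rw [h]
    · have hw1 : 1 ≤ w i := by
        have := hS (hwS i h1 h2); rw [Finset.mem_Icc] at this; exact this.1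
      exact (hdmono (w i) i hw1 h h2).le
  refine ⟨fun i j => if A + 1 ≤ i ∧ i ≤ C then z (w i) j else 0, ?_, ?_, ?_, ?_⟩
  · intro i j
    dsimp only
    split
    · exact hz0 _ _
    · exact le_refl 0
  · intro i j h
    dsimp only
    split
    · rename_i hi
      rcases h with h | h
      · exact absurd (Finset.mem_Icc.2 ⟨hi.1, hi.2⟩) h
      · exact hzz _ _ (Or.inr (lt_of_le_of_lt (hwd i hi.1 hi.2) h))
    · rfl
  · intro j hj
    have heq : ∑ i ∈ Finset.Icc 1 C, (if A + 1 ≤ i ∧ i ≤ C then z (w i) j else 0)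
        = ∑ i ∈ Finset.Icc (A + 1) C, z (w i) j := by
      have hsub : Finset.Icc (A + 1) C ⊆ Finset.Icc 1 C :=
        Finset.Icc_subset_Icc (by omega) le_rfl
      have hvan : ∀ i ∈ Finset.Icc 1 C, i ∉ Finset.Icc (A + 1) C →
          (if A + 1 ≤ i ∧ i ≤ C then z (w i) j else 0) = 0 := by
        intro i hi hni
        rw [Finset.mem_Icc] at hi hni
        rw [if_neg (by omega)]
      rw [← Finset.sum_subset hsub hvan]
      refine Finset.sum_congr rfl fun i hi => ?_
      rw [Finset.mem_Icc] at hi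
      rw [if_pos hi]
    rw [heq]
    have heq2 : ∑ i ∈ Finset.Icc (A + 1) C, z (w i) j = ∑ s ∈ S, z s j := by
      apply Finset.sum_bij (fun i hi => w i)
      · intro i hi
        rw [Finset.mem_Icc] at hi
        exact hwS i hi.1 hi.2
      · intro i hi i' hi' hww
        rw [Finset.mem_Icc] at hi hi'
        obtain ⟨h1, hv1⟩ := hwval i hi.1 hi.2
        obtain ⟨h2, hv2⟩ := hwval i' hi'.1 hi'.2
        rw [hv1, hv2] at hww
        have := hginj hww
        rw [Fin.mk.injEq] at this
        omega
      · intro s hs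
        have : s ∈ Set.range (S.orderEmbOfFin hScard) := by
          rw [S.range_orderEmbOfFin hScard]; exact hs
        obtain ⟨k, hk⟩ := this
        refine ⟨A + 1 + k, Finset.mem_Icc.2 ⟨by omega, by have := k.isLt; omega⟩, ?_⟩
        obtain ⟨h, hv⟩ := hwval (A + 1 + k) (by omega) (by have := k.isLt; omega)
        rw [hv, ← hk]
        congr 1
        ext
        simp
      · intro i hi
        rfl
    rw [heq2]
    calc ∑ s ∈ S, z s j = ∑ i ∈ Finset.Icc 1 C, z i j := by
          apply Finset.sum_subset hS
          intro i _ hni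
          exact hzz _ _ (Or.inl hni)
      _ ≤ B j := hzB j hj
  · intro i hi
    rw [Finset.mem_Icc] at hi
    have hval : ∀ j, (if A + 1 ≤ i ∧ i ≤ C then z (w i) j else 0) = z (w i) j := by
      intro j; rw [if_pos hi]
    simp_rw [hval]
    have hdle := hwd i hi.1 hi.2
    rw [← Finset.sum_subset (Finset.Icc_subset_Icc_right hdle)]
    · exact hzY _ (hwS i hi.1 hi.2)
    · intro j hj hnj
      rw [Finset.mem_Icc] at hj hnj
      exact hzz _ _ (Or.inr (by omega))
end

section
/- If S¹ and S² are disjoint subsets of {1,…,C} such that S¹ is schedulable on link 1 and S² is schedulable on link 2, then for every i ∈ {1,…,C}, |(S¹ ∪ S²) ∩ {1,…,i}| ≤ ⌊R¹(d(i))/Y⌋ + ⌊R²(d(i))/Y⌋. (Necessity of the two-link forward-scan condition V_{0,i} of Algorithm 1 when every chunk must be fetched entirely over a single link.) -/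
lemma one_link_bound
    (C : ℕ) (Y : ℝ) (hY : 0 < Y) (B : ℕ → ℝ)
    (d : ℕ → ℕ)
    (hdmono : ∀ i i', 1 ≤ i → i < i' → i' ≤ C → d i < d i')
    (S : Finset ℕ) (hS : S ⊆ Finset.Icc 1 C)
    (hsched : Schedulable C Y B d S)
    (i : ℕ) (hi : i ∈ Finset.Icc 1 C) :
    (S ∩ Finset.Icc 1 i).card ≤ ⌊(∑ j ∈ Finset.Icc 1 (d i), B j) / Y⌋₊ := by
  obtain ⟨z, hz0, hzz, hzB, hzY⟩ := hsched
  simp only [Finset.mem_Icc] at hi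
  have hdle : ∀ i' ∈ S ∩ Finset.Icc 1 i, d i' ≤ d i := by
    intro i' hi'
    simp only [Finset.mem_inter, Finset.mem_Icc] at hi'
    rcases lt_or_eq_of_le hi'.2.2 with h | h
    · exact (hdmono i' i hi'.2.1 h hi.2).le
    · rw [h]
  have key : Y * (S ∩ Finset.Icc 1 i).card ≤ ∑ j ∈ Finset.Icc 1 (d i), B j := by
    calc Y * (S ∩ Finset.Icc 1 i).card
        = ∑ i' ∈ S ∩ Finset.Icc 1 i, Y := by
          rw [Finset.sum_const, nsmul_eq_mul, mul_comm]
      _ = ∑ i' ∈ S ∩ Finset.Icc 1 i, ∑ j ∈ Finset.Icc 1 (d i), z i' j := by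
          apply Finset.sum_congr rfl
          intro i' hi'
          have hmem : i' ∈ S := (Finset.mem_inter.mp hi').1
          rw [← hzY i' hmem]
          apply Finset.sum_subset
          · exact Finset.Icc_subset_Icc_right (hdle i' hi')
          · intro j hj hj'
            simp only [Finset.mem_Icc] at hj hj'
            exact hzz i' j (Or.inr (by omega))
      _ = ∑ j ∈ Finset.Icc 1 (d i), ∑ i' ∈ S ∩ Finset.Icc 1 i, z i' j :=
          Finset.sum_comm
      _ ≤ ∑ j ∈ Finset.Icc 1 (d i), ∑ i' ∈ Finset.Icc 1 C, z i' j := by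
          apply Finset.sum_le_sum
          intro j _
          apply Finset.sum_le_sum_of_subset_of_nonneg
          · exact (Finset.inter_subset_left).trans hS
          · intro k _ _; exact hz0 k j
      _ ≤ ∑ j ∈ Finset.Icc 1 (d i), B j := by
          apply Finset.sum_le_sum
          intro j hj
          exact hzB j (Finset.mem_Icc.mp hj).1
  apply Nat.le_floor
  rw [le_div_iff₀ hY]
  linarith [key]

/-- Necessity of the two-link forward-scan condition `V_{0,i}` of Algorithm 1 when
every chunk is fetched entirely over a single link: if disjoint `S¹, S²` are
schedulable on link 1 and link 2 respectively, then for every `i ∈ {1,…,C}`,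
`|(S¹ ∪ S²) ∩ {1,…,i}| ≤ ⌊R¹(d(i))/Y⌋ + ⌊R²(d(i))/Y⌋`. -/
theorem two_link_forward_scan_necessary
    (C : ℕ) (hC : 1 ≤ C) (Y : ℝ) (hY : 0 < Y)
    (B1 B2 : ℕ → ℝ) (hB1 : ∀ j, 1 ≤ j → 0 ≤ B1 j) (hB2 : ∀ j, 1 ≤ j → 0 ≤ B2 j)
    (d : ℕ → ℕ)
    (hd1 : ∀ i, 1 ≤ i → i ≤ C → 1 ≤ d i)
    (hdmono : ∀ i i', 1 ≤ i → i < i' → i' ≤ C → d i < d i')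
    (S1 S2 : Finset ℕ) (hS1 : S1 ⊆ Finset.Icc 1 C) (hS2 : S2 ⊆ Finset.Icc 1 C)
    (hdisj : Disjoint S1 S2)
    (hsched1 : Schedulable C Y B1 d S1) (hsched2 : Schedulable C Y B2 d S2) :
    ∀ i ∈ Finset.Icc 1 C,
      ((S1 ∪ S2) ∩ Finset.Icc 1 i).card ≤
        ⌊(∑ j ∈ Finset.Icc 1 (d i), B1 j) / Y⌋₊ +
        ⌊(∑ j ∈ Finset.Icc 1 (d i), B2 j) / Y⌋₊ := by
  intro i hi
  have hcard : ((S1 ∪ S2) ∩ Finset.Icc 1 i).card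
      = (S1 ∩ Finset.Icc 1 i).card + (S2 ∩ Finset.Icc 1 i).card := by
    rw [Finset.union_inter_distrib_right]
    exact Finset.card_union_of_disjoint
      (Finset.disjoint_of_subset_left Finset.inter_subset_left
        (Finset.disjoint_of_subset_right Finset.inter_subset_left hdisj))
  rw [hcard]
  exact Nat.add_le_add
    (one_link_bound C Y hY B1 d hdmono S1 hS1 hsched1 i hi)
    (one_link_bound C Y hY B2 d hdmono S2 hS2 hsched2 i hi)
end

section
/- Suppose S ⊆ {1,…,C} satisfies |S ∩ {1,…,i}| ≤ c¹(i) + c²(i) for every i ∈ {1,…,C}. Then there exists a partition S = S¹ ∪ S² with S¹ ∩ S² = ∅ such that (S¹, S²) is a valid assignment. (Sufficiency of the two-link forward-scan condition: whenever the summed per-deadline capacities of the two links admit the prefix counts of S, the chunks of S can be split between the two links so that each link individually meets all its prefix capacity constraints.) -/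
/-- `(S¹, S²)` is a valid assignment of chunks to the two links: `S¹, S²` are disjoint
subsets of `{1,…,C}` and, for every `i ∈ {1,…,C}` and each link `k`, the number of
chunks of `S^k` among the first `i` is at most the per-deadline capacity `c^k(i)`. -/
def ValidAssignment (C : ℕ) (c1 c2 : ℕ → ℕ) (S1 S2 : Finset ℕ) : Prop :=
  S1 ⊆ Finset.Icc 1 C ∧ S2 ⊆ Finset.Icc 1 C ∧ Disjoint S1 S2 ∧
  (∀ i ∈ Finset.Icc 1 C, (S1 ∩ Finset.Icc 1 i).card ≤ c1 i) ∧
  (∀ i ∈ Finset.Icc 1 C, (S2 ∩ Finset.Icc 1 i).card ≤ c2 i)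

/-- Greedy assignment to link 1. -/
def greedy (S : Finset ℕ) (c1 : ℕ → ℕ) : ℕ → Finset ℕ
  | 0 => ∅
  | (i+1) =>
    if (i+1) ∈ S ∧ (greedy S c1 i).card < c1 (i+1) then insert (i+1) (greedy S c1 i)
    else greedy S c1 i

lemma greedy_zero (S : Finset ℕ) (c1 : ℕ → ℕ) : greedy S c1 0 = ∅ := rfl

lemma greedy_succ (S : Finset ℕ) (c1 : ℕ → ℕ) (i : ℕ) :
    greedy S c1 (i+1) =
      if (i+1) ∈ S ∧ (greedy S c1 i).card < c1 (i+1) then insert (i+1) (greedy S c1 i)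
      else greedy S c1 i := rfl

lemma greedy_subset (S : Finset ℕ) (c1 : ℕ → ℕ) (i : ℕ) :
    greedy S c1 i ⊆ S ∩ Finset.Icc 1 i := by
  induction i with
  | zero => simp [greedy_zero]
  | succ i ih =>
    rw [greedy_succ]
    split
    · rename_i h
      intro x hx
      rcases Finset.mem_insert.mp hx with rfl | hx
      · simp [h.1]
      · obtain ⟨h1, h2⟩ := Finset.mem_inter.mp (ih hx)
        obtain ⟨h3, h4⟩ := Finset.mem_Icc.mp h2
        exact Finset.mem_inter.mpr ⟨h1, Finset.mem_Icc.mpr ⟨h3, by omega⟩⟩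
    · intro x hx
      obtain ⟨h1, h2⟩ := Finset.mem_inter.mp (ih hx)
      obtain ⟨h3, h4⟩ := Finset.mem_Icc.mp h2
      exact Finset.mem_inter.mpr ⟨h1, Finset.mem_Icc.mpr ⟨h3, by omega⟩⟩

lemma greedy_inter (S : Finset ℕ) (c1 : ℕ → ℕ) {i j : ℕ} (hj : j ≤ i) :
    greedy S c1 i ∩ Finset.Icc 1 j = greedy S c1 j := by
  induction i with
  | zero =>
    have : j = 0 := Nat.le_zero.mp hj
    subst this
    rw [greedy_zero]
    simp
  | succ i ih =>
    rcases Nat.lt_or_ge j (i+1) with hji | hji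
    · have hji' : j ≤ i := by omega
      rw [← ih hji', greedy_succ]
      split
      · rw [Finset.insert_inter_of_notMem]
        simp only [Finset.mem_Icc]; omega
      · rfl
    · have : j = i + 1 := by omega
      subst this
      apply Finset.inter_eq_left.mpr
      intro x hx
      exact (Finset.mem_inter.mp (greedy_subset S c1 (i+1) hx)).2

lemma greedy_card (S : Finset ℕ) (C : ℕ) (c1 : ℕ → ℕ)
    (hc1 : ∀ i i', 1 ≤ i → i ≤ i' → i' ≤ C → c1 i ≤ c1 i') :
    ∀ i, 1 ≤ i → i ≤ C → (greedy S c1 i).card ≤ c1 i := by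
  intro i
  induction i with
  | zero => omega
  | succ i ih =>
    intro _ hiC
    rw [greedy_succ]
    split
    · rename_i h
      rw [Finset.card_insert_of_notMem]
      · omega
      · intro hmem
        have h2 := (Finset.mem_inter.mp (greedy_subset S c1 i hmem)).2
        have := Finset.mem_Icc.mp h2
        omega
    · rcases Nat.eq_zero_or_pos i with rfl | hi
      · simp [greedy_zero]
      · exact le_trans (ih hi (by omega)) (hc1 i (i+1) hi (by omega) hiC)

lemma greedy_invariant (S : Finset ℕ) (C : ℕ) (c1 c2 : ℕ → ℕ)
    (hc2 : ∀ i i', 1 ≤ i → i ≤ i' → i' ≤ C → c2 i ≤ c2 i')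
    (hpre : ∀ i ∈ Finset.Icc 1 C, (S ∩ Finset.Icc 1 i).card ≤ c1 i + c2 i) :
    ∀ i, i ≤ C → (S ∩ Finset.Icc 1 i).card ≤ c2 i + (greedy S c1 i).card := by
  intro i
  induction i with
  | zero => simp
  | succ i ih =>
    intro hiC
    have hsplit : S ∩ Finset.Icc 1 (i+1)
        = if (i+1) ∈ S then insert (i+1) (S ∩ Finset.Icc 1 i) else S ∩ Finset.Icc 1 i := by
      split
      · rename_i h
        ext x
        simp only [Finset.mem_inter, Finset.mem_Icc, Finset.mem_insert]
        constructor
        · rintro ⟨hx, h1, h2⟩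
          rcases Nat.lt_or_ge x (i+1) with hlt | hge
          · exact Or.inr ⟨hx, h1, by omega⟩
          · exact Or.inl (by omega)
        · rintro (rfl | ⟨hx, h1, h2⟩)
          · exact ⟨h, by omega, le_refl _⟩
          · exact ⟨hx, h1, by omega⟩
      · rename_i h
        ext x
        simp only [Finset.mem_inter, Finset.mem_Icc]
        constructor
        · rintro ⟨hx, h1, h2⟩
          refine ⟨hx, h1, ?_⟩
          rcases Nat.lt_or_ge x (i+1) with hlt | hge
          · omega
          · exfalso; apply h; have : x = i + 1 := by omega
            rwa [← this]
        · rintro ⟨hx, h1, h2⟩; exact ⟨hx, h1, by omega⟩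
    by_cases hmem : (i+1) ∈ S
    · by_cases hcap : (greedy S c1 i).card < c1 (i+1)
      · -- added to link 1
        have hg : greedy S c1 (i+1) = insert (i+1) (greedy S c1 i) := by
          rw [greedy_succ, if_pos ⟨hmem, hcap⟩]
        have hnot1 : (i+1) ∉ greedy S c1 i := by
          intro hmem'
          have h2 := (Finset.mem_inter.mp (greedy_subset S c1 i hmem')).2
          have := Finset.mem_Icc.mp h2
          omega
        have hnot2 : (i+1) ∉ S ∩ Finset.Icc 1 i := by
          simp only [Finset.mem_inter, Finset.mem_Icc]; omega
        rw [hg, hsplit, if_pos hmem, Finset.card_insert_of_notMem hnot1,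
          Finset.card_insert_of_notMem hnot2]
        rcases Nat.eq_zero_or_pos i with rfl | hi
        · simp [greedy_zero]
        · have := ih (by omega)
          have := hc2 i (i+1) hi (by omega) hiC
          omega
      · -- link 1 full at deadline i+1
        have hg : greedy S c1 (i+1) = greedy S c1 i := by
          rw [greedy_succ, if_neg]; tauto
        have h1 := hpre (i+1) (by simp; omega)
        have h2 : c1 (i+1) ≤ (greedy S c1 (i+1)).card := by rw [hg]; omega
        omega
    · -- i+1 not in S
      have hg : greedy S c1 (i+1) = greedy S c1 i := by
        rw [greedy_succ, if_neg]; tauto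
      rw [hg, hsplit, if_neg hmem]
      rcases Nat.eq_zero_or_pos i with rfl | hi
      · simp
      · have := ih (by omega)
        have := hc2 i (i+1) hi (by omega) hiC
        omega

/-- Sufficiency of the two-link forward-scan condition: if
`|S ∩ {1,…,i}| ≤ c¹(i) + c²(i)` for every `i ∈ {1,…,C}`, then `S` can be partitioned
as `S = S¹ ∪ S²` with `S¹ ∩ S² = ∅` such that `(S¹, S²)` is a valid assignment. -/
theorem two_link_forward_scan_sufficient
    (C : ℕ) (hC : 1 ≤ C) (c1 c2 : ℕ → ℕ)
    (hc1 : ∀ i i', 1 ≤ i → i ≤ i' → i' ≤ C → c1 i ≤ c1 i')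
    (hc2 : ∀ i i', 1 ≤ i → i ≤ i' → i' ≤ C → c2 i ≤ c2 i')
    (S : Finset ℕ) (hS : S ⊆ Finset.Icc 1 C)
    (hpre : ∀ i ∈ Finset.Icc 1 C, (S ∩ Finset.Icc 1 i).card ≤ c1 i + c2 i) :
    ∃ S1 S2 : Finset ℕ, S1 ∪ S2 = S ∧ ValidAssignment C c1 c2 S1 S2 := by
  set S1 := greedy S c1 C with hS1
  have hS1sub : S1 ⊆ S := fun x hx => (Finset.mem_inter.mp (greedy_subset S c1 C hx)).1
  refine ⟨S1, S \ S1, ?_, ?_, ?_, ?_, ?_, ?_⟩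
  · exact Finset.union_sdiff_of_subset hS1sub
  · exact hS1sub.trans hS
  · exact (Finset.sdiff_subset).trans hS
  · exact Finset.disjoint_sdiff
  · intro i hi
    simp only [Finset.mem_Icc] at hi
    rw [hS1, greedy_inter S c1 hi.2]
    exact greedy_card S C c1 hc1 i hi.1 hi.2
  · intro i hi
    simp only [Finset.mem_Icc] at hi
    have heq : (S \ S1) ∩ Finset.Icc 1 i = (S ∩ Finset.Icc 1 i) \ greedy S c1 i := by
      rw [hS1, ← greedy_inter S c1 hi.2]
      ext x
      simp only [Finset.mem_sdiff, Finset.mem_inter]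
      tauto
    have hsub : greedy S c1 i ⊆ S ∩ Finset.Icc 1 i := greedy_subset S c1 i
    rw [heq, Finset.card_sdiff_of_subset hsub]
    have h1 := greedy_invariant S C c1 c2 hc2 hpre i hi.2
    omega
end

section
/- Let A = max_{1 ≤ i ≤ C} max(0, i − c¹(i) − c²(i)). Then the maximum of |S¹ ∪ S²| over all valid assignments (S¹, S²) equals C − A. (Two-link version of Lemma 1 of the paper: the minimum number of base-layer skips over all assignments of whole chunks to the two links equals A, and it is attained.) -/
/-!
Upper bound: for every deadline `i`, at most `c¹(i) + c²(i)` of the chunks `1,…,i` and at most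
`C - i` of the later ones can be delivered. Lower bound: the greedy rule "give chunk `i` to
link 1 if it still has capacity at deadline `i`, else to link 2, else skip it" skips a chunk
only when both links are saturated, and by monotonicity of the capacities the number of chunks
skipped among the first `i` is then exactly `max_{j ≤ i} (j - c¹(j) - c²(j))⁺`.
-/

open Finset

theorem card_union_le_of_validAssignment {C : ℕ} {c1 c2 : ℕ → ℕ} {S1 S2 : Finset ℕ}
    (hS : ValidAssignment C c1 c2 S1 S2) :
    #(S1 ∪ S2) ≤ C - (Icc 1 C).sup (fun i => i - (c1 i + c2 i)) := by
  obtain ⟨hS1, hS2, -, hc1, hc2⟩ := hS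
  have hle_C : #(S1 ∪ S2) ≤ C := by
    simpa using card_le_card (union_subset hS1 hS2)
  have hle_i : ∀ i ∈ Icc 1 C, #(S1 ∪ S2) ≤ c1 i + c2 i + (C - i) := fun i hi => by
    have hsplit : S1 ∪ S2 ⊆ (S1 ∩ Icc 1 i ∪ S2 ∩ Icc 1 i) ∪ Ioc i C := by
      intro j hj
      have hjC := mem_Icc.mp (union_subset hS1 hS2 hj)
      rcases mem_union.mp hj with hj | hj <;> by_cases hji : j ≤ i <;> simp [*] <;> omega
    calc #(S1 ∪ S2) ≤ #(S1 ∩ Icc 1 i) + #(S2 ∩ Icc 1 i) + #(Ioc i C) :=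
          (card_le_card hsplit).trans <| (card_union_le _ _).trans <|
            Nat.add_le_add_right (card_union_le _ _) _
      _ ≤ c1 i + c2 i + (C - i) := by
          rw [Nat.card_Ioc]; gcongr <;> [exact hc1 i hi; exact hc2 i hi]
  have : (Icc 1 C).sup (fun i => i - (c1 i + c2 i)) ≤ C - #(S1 ∪ S2) :=
    Finset.sup_le fun i hi => by have := hle_i i hi; have := mem_Icc.mp hi; omega
  omega

namespace TwoLink

variable (c1 c2 : ℕ → ℕ)

def greedy : ℕ → Finset ℕ × Finset ℕ
  | 0 => (∅, ∅)
  | i + 1 =>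
    let S := greedy i
    if #S.1 < c1 (i + 1) then (insert (i + 1) S.1, S.2)
    else if #S.2 < c2 (i + 1) then (S.1, insert (i + 1) S.2)
    else S

theorem greedy_succ_cases (i : ℕ) :
    (#(greedy c1 c2 i).1 < c1 (i + 1) ∧
      greedy c1 c2 (i + 1) = (insert (i + 1) (greedy c1 c2 i).1, (greedy c1 c2 i).2)) ∨
    (c1 (i + 1) ≤ #(greedy c1 c2 i).1 ∧ #(greedy c1 c2 i).2 < c2 (i + 1) ∧
      greedy c1 c2 (i + 1) = ((greedy c1 c2 i).1, insert (i + 1) (greedy c1 c2 i).2)) ∨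
    (c1 (i + 1) ≤ #(greedy c1 c2 i).1 ∧ c2 (i + 1) ≤ #(greedy c1 c2 i).2 ∧
      greedy c1 c2 (i + 1) = greedy c1 c2 i) := by
  simp only [greedy]
  split_ifs with h1 h2 <;> simp_all

theorem greedy_union_subset (i : ℕ) : (greedy c1 c2 i).1 ∪ (greedy c1 c2 i).2 ⊆ Icc 1 i := by
  induction i with
  | zero => simp [greedy]
  | succ i ih =>
    have hIcc : Icc 1 i ⊆ Icc 1 (i + 1) := Icc_subset_Icc_right (by omega)
    have hnew : i + 1 ∈ Icc 1 (i + 1) := by simp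
    rcases greedy_succ_cases c1 c2 i with ⟨-, h⟩ | ⟨-, -, h⟩ | ⟨-, -, h⟩ <;> rw [h]
    · rw [insert_union]; exact insert_subset hnew (ih.trans hIcc)
    · rw [union_insert]; exact insert_subset hnew (ih.trans hIcc)
    · exact ih.trans hIcc

theorem succ_notMem_greedy (i : ℕ) : i + 1 ∉ (greedy c1 c2 i).1 ∪ (greedy c1 c2 i).2 :=
  fun h => by simpa using greedy_union_subset c1 c2 i h

theorem greedy_disjoint (i : ℕ) : Disjoint (greedy c1 c2 i).1 (greedy c1 c2 i).2 := by
  induction i with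
  | zero => simp [greedy]
  | succ i ih =>
    have := succ_notMem_greedy c1 c2 i
    rw [mem_union, not_or] at this
    rcases greedy_succ_cases c1 c2 i with ⟨-, h⟩ | ⟨-, -, h⟩ | ⟨-, -, h⟩ <;> rw [h]
    · exact disjoint_insert_left.mpr ⟨this.2, ih⟩
    · exact disjoint_insert_right.mpr ⟨this.1, ih⟩
    · exact ih

theorem greedy_inter_Icc {i j : ℕ} (hji : j ≤ i) :
    (greedy c1 c2 i).1 ∩ Icc 1 j = (greedy c1 c2 j).1 ∧
      (greedy c1 c2 i).2 ∩ Icc 1 j = (greedy c1 c2 j).2 := by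
  induction i, hji using Nat.le_induction with
  | base =>
    have := greedy_union_subset c1 c2 j
    exact ⟨inter_eq_left.mpr (subset_union_left.trans this),
      inter_eq_left.mpr (subset_union_right.trans this)⟩
  | succ i hji ih =>
    have hnot : i + 1 ∉ Icc 1 j := by simp; omega
    rcases greedy_succ_cases c1 c2 i with ⟨-, h⟩ | ⟨-, -, h⟩ | ⟨-, -, h⟩ <;>
      simp only [h, insert_inter_of_notMem hnot, ih, and_self]

variable {c1 c2}

theorem greedy_card_succ_le {i : ℕ} (h1 : #(greedy c1 c2 i).1 ≤ c1 (i + 1))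
    (h2 : #(greedy c1 c2 i).2 ≤ c2 (i + 1)) :
    #(greedy c1 c2 (i + 1)).1 ≤ c1 (i + 1) ∧ #(greedy c1 c2 (i + 1)).2 ≤ c2 (i + 1) := by
  rcases greedy_succ_cases c1 c2 i with ⟨h1', h⟩ | ⟨-, h2', h⟩ | ⟨-, -, h⟩ <;> rw [h]
  · exact ⟨(card_insert_le _ _).trans h1', h2⟩
  · exact ⟨h1, (card_insert_le _ _).trans h2'⟩
  · exact ⟨h1, h2⟩

theorem greedy_card_le_succ {C : ℕ} (hc1 : MonotoneOn c1 (Set.Icc 1 C))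
    (hc2 : MonotoneOn c2 (Set.Icc 1 C)) {i : ℕ} (hi : i + 1 ≤ C) :
    #(greedy c1 c2 i).1 ≤ c1 (i + 1) ∧ #(greedy c1 c2 i).2 ≤ c2 (i + 1) := by
  induction i with
  | zero => simp [greedy]
  | succ i ih =>
    obtain ⟨h1, h2⟩ := greedy_card_succ_le (ih (by omega)).1 (ih (by omega)).2
    exact ⟨h1.trans (hc1 (by simp; omega) (by simp; omega) (by omega)),
      h2.trans (hc2 (by simp; omega) (by simp; omega) (by omega))⟩

theorem greedy_card_le {C : ℕ} (hc1 : MonotoneOn c1 (Set.Icc 1 C))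
    (hc2 : MonotoneOn c2 (Set.Icc 1 C)) {i : ℕ} (hi : i ∈ Icc 1 C) :
    #(greedy c1 c2 i).1 ≤ c1 i ∧ #(greedy c1 c2 i).2 ≤ c2 i := by
  obtain ⟨hi1, hiC⟩ := mem_Icc.mp hi
  obtain ⟨k, rfl⟩ : ∃ k, i = k + 1 := ⟨i - 1, by omega⟩
  exact greedy_card_succ_le (greedy_card_le_succ hc1 hc2 hiC).1 (greedy_card_le_succ hc1 hc2 hiC).2

theorem greedy_validAssignment {C : ℕ} (hc1 : MonotoneOn c1 (Set.Icc 1 C))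
    (hc2 : MonotoneOn c2 (Set.Icc 1 C)) :
    ValidAssignment C c1 c2 (greedy c1 c2 C).1 (greedy c1 c2 C).2 := by
  have hsub := greedy_union_subset c1 c2 C
  refine ⟨subset_union_left.trans hsub, subset_union_right.trans hsub, greedy_disjoint c1 c2 C,
    fun i hi => ?_, fun i hi => ?_⟩
  · rw [(greedy_inter_Icc c1 c2 (mem_Icc.mp hi).2).1]
    exact (greedy_card_le hc1 hc2 hi).1
  · rw [(greedy_inter_Icc c1 c2 (mem_Icc.mp hi).2).2]
    exact (greedy_card_le hc1 hc2 hi).2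

theorem card_greedy_add_sup {C : ℕ} (hc1 : MonotoneOn c1 (Set.Icc 1 C))
    (hc2 : MonotoneOn c2 (Set.Icc 1 C)) {i : ℕ} (hi : i ≤ C) :
    #((greedy c1 c2 i).1 ∪ (greedy c1 c2 i).2) + (Icc 1 i).sup (fun j => j - (c1 j + c2 j)) =
      i := by
  induction i with
  | zero => simp [greedy]
  | succ i ih =>
    have hsup : (Icc 1 (i + 1)).sup (fun j => j - (c1 j + c2 j)) =
        max (i + 1 - (c1 (i + 1) + c2 (i + 1))) ((Icc 1 i).sup fun j => j - (c1 j + c2 j)) := by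
      rw [← insert_Icc_right_eq_Icc_add_one (by omega), sup_insert]
    have ih := ih (by omega)
    have hprev := greedy_card_le_succ hc1 hc2 hi
    have hnew := succ_notMem_greedy c1 c2 i
    rw [mem_union, not_or] at hnew
    rw [card_union_of_disjoint (greedy_disjoint c1 c2 _)] at ih ⊢
    -- If chunk `i + 1` is skipped, both links are full, so `c1 (i + 1) + c2 (i + 1)` is the number
    -- of chunks assigned so far and the new term is the maximum; otherwise `hprev` makes it small.
    rcases greedy_succ_cases c1 c2 i with ⟨h1, h⟩ | ⟨h1, h2, h⟩ | ⟨h1, h2, h⟩ <;>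
      simp only [h, hsup, card_insert_of_notMem hnew.1, card_insert_of_notMem hnew.2] <;> omega

end TwoLink

theorem two_link_min_skips_general
    (C : ℕ) (c1 c2 : ℕ → ℕ)
    (hc1 : ∀ i i', 1 ≤ i → i ≤ i' → i' ≤ C → c1 i ≤ c1 i')
    (hc2 : ∀ i i', 1 ≤ i → i ≤ i' → i' ≤ C → c2 i ≤ c2 i')
    (A : ℕ) (hA : A = (Finset.Icc 1 C).sup (fun i => i - (c1 i + c2 i))) :
    IsGreatest {n : ℕ | ∃ S1 S2 : Finset ℕ,
      ValidAssignment C c1 c2 S1 S2 ∧ (S1 ∪ S2).card = n} (C - A) := by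
  have hm1 : MonotoneOn c1 (Set.Icc 1 C) := fun i hi i' hi' h => hc1 i i' hi.1 h hi'.2
  have hm2 : MonotoneOn c2 (Set.Icc 1 C) := fun i hi i' hi' h => hc2 i i' hi.1 h hi'.2
  subst hA
  refine ⟨⟨_, _, TwoLink.greedy_validAssignment hm1 hm2, ?_⟩, ?_⟩
  · have := TwoLink.card_greedy_add_sup hm1 hm2 le_rfl
    omega
  · rintro n ⟨S1, S2, hS, rfl⟩
    exact card_union_le_of_validAssignment hS

/-- Two-link version of Lemma 1: with
`A = max_{1≤i≤C} max(0, i − c¹(i) − c²(i))` (natural subtraction realizes `max(0,·)`),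
the maximum of `|S¹ ∪ S²|` over all valid assignments `(S¹, S²)` equals `C − A`;
i.e., the minimum number of base-layer skips equals `A` and it is attained. -/
theorem two_link_min_skips
    (C : ℕ) (hC : 1 ≤ C) (c1 c2 : ℕ → ℕ)
    (hc1 : ∀ i i', 1 ≤ i → i ≤ i' → i' ≤ C → c1 i ≤ c1 i')
    (hc2 : ∀ i i', 1 ≤ i → i ≤ i' → i' ≤ C → c2 i ≤ c2 i')
    (A : ℕ) (hA : A = (Finset.Icc 1 C).sup (fun i => i - (c1 i + c2 i))) :
    IsGreatest {n : ℕ | ∃ S1 S2 : Finset ℕ,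
      ValidAssignment C c1 c2 S1 S2 ∧ (S1 ∪ S2).card = n} (C - A) :=
  two_link_min_skips_general C c1 c2 hc1 hc2 A hA
end

section
/- Fix a ∈ {0,…,N} and suppose the weights satisfy the paper's condition (2): λ_a^1 > C · (∑_{n=a}^{N} λ_n^2 + ∑_{n=a+1}^{N} λ_n^1). Let v and w be count vectors with all entries at most C such that v(n,1) = w(n,1) and v(n,2) = w(n,2) for every n < a, and v(a,1) > w(a,1). Then f(v) > f(w). (Under condition (2), fetching even one more chunk at layer a over link 1 outweighs every possible change in layers ≥ a on link 2 and layers > a on link 1.) -/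
/-- Under the paper's condition (2) on the weights, fetching even one more chunk at
layer `a` over link 1 outweighs every possible change in layers `≥ a` on link 2 and
layers `> a` on link 1: if `v` and `w` are count vectors (entries at most `C`) that
agree on all layers `n < a` on both links and `v(a,1) > w(a,1)`, then `f(v) > f(w)`,
where `f(v) = ∑_{n=0}^N (λ_n^1 v(n,1) + λ_n^2 v(n,2))`. -/
theorem weight_condition_link1_priority
    (C N : ℕ) (hC : 1 ≤ C) (a : ℕ) (ha : a ≤ N)
    (lam : ℕ → ℕ → ℝ) (hlam : ∀ n, n ≤ N → 0 ≤ lam n 1 ∧ 0 ≤ lam n 2)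
    (hcond : lam a 1 > (C : ℝ) *
      ((∑ n ∈ Finset.Icc a N, lam n 2) + ∑ n ∈ Finset.Icc (a + 1) N, lam n 1))
    (v w : ℕ → ℕ → ℕ)
    (hv : ∀ n, n ≤ N → v n 1 ≤ C ∧ v n 2 ≤ C)
    (hw : ∀ n, n ≤ N → w n 1 ≤ C ∧ w n 2 ≤ C)
    (hagree : ∀ n, n < a → v n 1 = w n 1 ∧ v n 2 = w n 2)
    (hmore : v a 1 > w a 1) :
    (∑ n ∈ Finset.range (N + 1), (lam n 1 * (v n 1 : ℝ) + lam n 2 * (v n 2 : ℝ))) >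
    (∑ n ∈ Finset.range (N + 1), (lam n 1 * (w n 1 : ℝ) + lam n 2 * (w n 2 : ℝ))) := by
  have hsplit : ∀ g : ℕ → ℝ, ∑ n ∈ Finset.range (N + 1), g n
      = ∑ n ∈ Finset.range a, g n + ∑ n ∈ Finset.Icc a N, g n := by
    intro g
    simp only [Finset.range_eq_Ico]
    rw [← Finset.sum_Ico_consecutive g (Nat.zero_le a) (by omega : a ≤ N + 1),
      Finset.Ico_add_one_right_eq_Icc]
  rw [hsplit, hsplit]
  have heq : ∑ n ∈ Finset.range a, (lam n 1 * (v n 1 : ℝ) + lam n 2 * (v n 2 : ℝ))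
      = ∑ n ∈ Finset.range a, (lam n 1 * (w n 1 : ℝ) + lam n 2 * (w n 2 : ℝ)) := by
    apply Finset.sum_congr rfl
    intro n hn
    simp [(hagree n (Finset.mem_range.mp hn)).1, (hagree n (Finset.mem_range.mp hn)).2]
  rw [heq]
  have hIcc : Finset.Icc a N = insert a (Finset.Icc (a + 1) N) := by
    rw [Finset.Icc_add_one_left_eq_Ioc, Finset.Icc_eq_cons_Ioc ha, Finset.cons_eq_insert]
  have hvlb : lam a 1 * (v a 1 : ℝ)
      ≤ ∑ n ∈ Finset.Icc a N, (lam n 1 * (v n 1 : ℝ) + lam n 2 * (v n 2 : ℝ)) := by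
    have h1 : lam a 1 * (v a 1 : ℝ) ≤ lam a 1 * (v a 1 : ℝ) + lam a 2 * (v a 2 : ℝ) := by
      have h2 : (0:ℝ) ≤ lam a 2 * (v a 2 : ℝ) :=
        mul_nonneg (hlam a ha).2 (by positivity)
      linarith
    refine h1.trans (Finset.single_le_sum (f := fun n => lam n 1 * (v n 1 : ℝ) + lam n 2 * (v n 2 : ℝ)) ?_ ?_)
    · intro n hn
      have hn' := Finset.mem_Icc.mp hn
      have := (hlam n hn'.2).1
      have := (hlam n hn'.2).2
      positivity
    · exact Finset.mem_Icc.mpr ⟨le_refl a, ha⟩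
  have hwub : ∑ n ∈ Finset.Icc a N, (lam n 1 * (w n 1 : ℝ) + lam n 2 * (w n 2 : ℝ))
      ≤ lam a 1 * (w a 1 : ℝ) + (C : ℝ) *
        ((∑ n ∈ Finset.Icc a N, lam n 2) + ∑ n ∈ Finset.Icc (a + 1) N, lam n 1) := by
    have hsum2 : ∑ n ∈ Finset.Icc a N, lam n 2 * (w n 2 : ℝ)
        ≤ ∑ n ∈ Finset.Icc a N, lam n 2 * (C : ℝ) := by
      apply Finset.sum_le_sum
      intro n hn
      have hn' := Finset.mem_Icc.mp hn
      exact mul_le_mul_of_nonneg_left (by exact_mod_cast (hw n hn'.2).2) (hlam n hn'.2).2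
    have hsum1 : ∑ n ∈ Finset.Icc (a + 1) N, lam n 1 * (w n 1 : ℝ)
        ≤ ∑ n ∈ Finset.Icc (a + 1) N, lam n 1 * (C : ℝ) := by
      apply Finset.sum_le_sum
      intro n hn
      have hn' := Finset.mem_Icc.mp hn
      exact mul_le_mul_of_nonneg_left (by exact_mod_cast (hw n hn'.2).1) (hlam n hn'.2).1
    have hdec : ∑ n ∈ Finset.Icc a N, (lam n 1 * (w n 1 : ℝ) + lam n 2 * (w n 2 : ℝ))
        = lam a 1 * (w a 1 : ℝ)
          + ∑ n ∈ Finset.Icc (a + 1) N, lam n 1 * (w n 1 : ℝ)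
          + ∑ n ∈ Finset.Icc a N, lam n 2 * (w n 2 : ℝ) := by
      rw [Finset.sum_add_distrib]
      congr 1
      rw [hIcc, Finset.sum_insert (by simp)]
    rw [hdec]
    rw [← Finset.sum_mul] at hsum1 hsum2
    nlinarith [hsum1, hsum2]
  have hkey : lam a 1 * (w a 1 : ℝ) + lam a 1 ≤ lam a 1 * (v a 1 : ℝ) := by
    have : (w a 1 : ℝ) + 1 ≤ (v a 1 : ℝ) := by exact_mod_cast hmore
    nlinarith [(hlam a ha).1]
  have htail : ∑ n ∈ Finset.Icc a N, (lam n 1 * (w n 1 : ℝ) + lam n 2 * (w n 2 : ℝ))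
      < ∑ n ∈ Finset.Icc a N, (lam n 1 * (v n 1 : ℝ) + lam n 2 * (v n 2 : ℝ)) := by
    calc ∑ n ∈ Finset.Icc a N, (lam n 1 * (w n 1 : ℝ) + lam n 2 * (w n 2 : ℝ))
        ≤ lam a 1 * (w a 1 : ℝ) + (C : ℝ) *
          ((∑ n ∈ Finset.Icc a N, lam n 2) + ∑ n ∈ Finset.Icc (a + 1) N, lam n 1) := hwub
      _ < lam a 1 * (w a 1 : ℝ) + lam a 1 := by linarith
      _ ≤ lam a 1 * (v a 1 : ℝ) := hkey
      _ ≤ _ := hvlb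
  linarith
end

section
/- Fix a ∈ {0,…,N} and suppose λ_a^2 > C · ∑_{n=a+1}^{N} λ_n^2 (the paper's condition (3)). Let v and w be count vectors with all entries at most C such that v(n,1) = w(n,1) for every n ∈ {0,…,N}, v(n,2) = w(n,2) for every n < a, and v(a,2) > w(a,2). Then f(v) > f(w). (Under condition (3), among solutions with identical link-1 decisions and identical lower link-2 layers, fetching one more chunk at layer a over link 2 outweighs all possible changes at higher layers on link 2.) -/
/-- Under the paper's condition (3) on the weights, among solutions with identical
link-1 decisions and identical lower link-2 layers, fetching one more chunk at layer
`a` over link 2 outweighs all possible changes at higher layers on link 2: if `v` and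
`w` are count vectors (entries at most `C`) with `v(n,1) = w(n,1)` for all `n ≤ N`,
`v(n,2) = w(n,2)` for all `n < a`, and `v(a,2) > w(a,2)`, then `f(v) > f(w)`, where
`f(v) = ∑_{n=0}^N (λ_n^1 v(n,1) + λ_n^2 v(n,2))`. -/
theorem weight_condition_link2_priority
    (C N : ℕ) (hC : 1 ≤ C) (a : ℕ) (ha : a ≤ N)
    (lam : ℕ → ℕ → ℝ) (hlam : ∀ n, n ≤ N → 0 ≤ lam n 1 ∧ 0 ≤ lam n 2)
    (hcond : lam a 2 > (C : ℝ) * ∑ n ∈ Finset.Icc (a + 1) N, lam n 2)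
    (v w : ℕ → ℕ → ℕ)
    (hv : ∀ n, n ≤ N → v n 1 ≤ C ∧ v n 2 ≤ C)
    (hw : ∀ n, n ≤ N → w n 1 ≤ C ∧ w n 2 ≤ C)
    (hlink1 : ∀ n, n ≤ N → v n 1 = w n 1)
    (hagree : ∀ n, n < a → v n 2 = w n 2)
    (hmore : v a 2 > w a 2) :
    (∑ n ∈ Finset.range (N + 1), (lam n 1 * (v n 1 : ℝ) + lam n 2 * (v n 2 : ℝ))) >
    (∑ n ∈ Finset.range (N + 1), (lam n 1 * (w n 1 : ℝ) + lam n 2 * (w n 2 : ℝ))) := by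
  rw [gt_iff_lt, ← sub_pos, ← Finset.sum_sub_distrib]
  have hsum : ∀ n ∈ Finset.range (N + 1),
      (lam n 1 * (v n 1 : ℝ) + lam n 2 * (v n 2 : ℝ)) -
      (lam n 1 * (w n 1 : ℝ) + lam n 2 * (w n 2 : ℝ)) =
      lam n 2 * ((v n 2 : ℝ) - (w n 2 : ℝ)) := by
    intro n hn
    rw [Finset.mem_range, Nat.lt_succ_iff] at hn
    rw [hlink1 n hn]; ring
  rw [Finset.sum_congr rfl hsum]
  have hsplit : Finset.range (N + 1) = Finset.Ico 0 a ∪ Finset.Ico a (N + 1) := by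
    rw [Finset.range_eq_Ico, Finset.Ico_union_Ico_eq_Ico (Nat.zero_le a) (by omega)]
  rw [hsplit, Finset.sum_union (by
    apply Finset.Ico_disjoint_Ico_consecutive)]
  have h1 : ∑ n ∈ Finset.Ico 0 a, lam n 2 * ((v n 2 : ℝ) - (w n 2 : ℝ)) = 0 := by
    apply Finset.sum_eq_zero
    intro n hn
    rw [Finset.mem_Ico] at hn
    rw [hagree n hn.2]; ring
  rw [h1, zero_add]
  have h2 : Finset.Ico a (N + 1) = insert a (Finset.Ico (a + 1) (N + 1)) := by
    ext x; simp [Finset.mem_Ico, Finset.mem_insert]; omega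
  rw [h2, Finset.sum_insert (by simp)]
  have hterm : lam a 2 ≤ lam a 2 * ((v a 2 : ℝ) - (w a 2 : ℝ)) := by
    have h : (1 : ℝ) ≤ (v a 2 : ℝ) - (w a 2 : ℝ) := by
      have : w a 2 + 1 ≤ v a 2 := hmore
      have := Nat.cast_le (α := ℝ).2 this
      push_cast at this ⊢; linarith
    nlinarith [(hlam a ha).2]
  have htail : -( (C : ℝ) * ∑ n ∈ Finset.Icc (a + 1) N, lam n 2) ≤
      ∑ n ∈ Finset.Ico (a + 1) (N + 1), lam n 2 * ((v n 2 : ℝ) - (w n 2 : ℝ)) := by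
    have heq : Finset.Ico (a + 1) (N + 1) = Finset.Icc (a + 1) N := by
      rw [Finset.Ico_add_one_right_eq_Icc]
    rw [heq, Finset.mul_sum, ← Finset.sum_neg_distrib]
    apply Finset.sum_le_sum
    intro n hn
    rw [Finset.mem_Icc] at hn
    have h0 := (hlam n hn.2).2
    have hvw : (0:ℝ) - C ≤ (v n 2 : ℝ) - (w n 2 : ℝ) := by
      have h1 : (w n 2 : ℝ) ≤ C := by exact_mod_cast (hw n hn.2).2
      have h2 : (0:ℝ) ≤ (v n 2 : ℝ) := Nat.cast_nonneg _
      linarith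
    nlinarith
  linarith
end

section
/- Suppose λ_0^1 > C · (∑_{n=0}^{N} λ_n^2 + ∑_{n=1}^{N} λ_n^1) (the paper's condition (2) with a = 0). Let V be a nonempty finite set of count vectors all of whose entries are at most C, and let v* ∈ V maximize f over V. Then v*(0,1) = max_{v ∈ V} v(0,1). (Any maximizer of the weighted objective fetches the maximum possible number of base layers over the preferred link; the weights enforce that minimizing base-layer skips on link 1 is the first priority.) -/
/-!
Condition (2) says that one base layer over link 1 outweighs every other term of the objective
put together, even with all of them at their maximal count `C`. So if some `v ∈ V` had
`v(0,1) > v*(0,1)`, then `f(v) ≥ λ_0^1 (v*(0,1) + 1) > f(v*)`, contradicting the maximality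
of `v*`.
-/

open Finset

lemma Finset.sum_Icc_zero_eq_add_sum_Icc_one {M : Type*} [AddCommMonoid M] (g : ℕ → M) (N : ℕ) :
    ∑ n ∈ Icc 0 N, g n = g 0 + ∑ n ∈ Icc 1 N, g n := by
  rw [← sum_Ioc_add_eq_sum_Icc N.zero_le, ← Icc_add_one_left_eq_Ioc, zero_add, add_comm]

lemma Nat.le_of_mul_add_le_mul_add {w R r s : ℝ} {x y : ℕ} (hw : 0 ≤ w) (hr : 0 ≤ r)
    (hs : s ≤ R) (hRw : R < w) (h : w * x + r ≤ w * y + s) : x ≤ y := by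
  by_contra! hyx
  have hstep : (y : ℝ) + 1 ≤ x := by exact_mod_cast hyx
  nlinarith

section Objective

variable (N : ℕ) (lam : ℕ → ℕ → ℝ)

def objective (v : ℕ → ℕ → ℕ) : ℝ :=
  ∑ n ∈ range (N + 1), (lam n 1 * (v n 1 : ℝ) + lam n 2 * (v n 2 : ℝ))

def objectiveTail (v : ℕ → ℕ → ℕ) : ℝ :=
  lam 0 2 * (v 0 2 : ℝ) + ∑ n ∈ Icc 1 N, (lam n 1 * (v n 1 : ℝ) + lam n 2 * (v n 2 : ℝ))

variable {N lam}

lemma objective_eq_add_objectiveTail (v : ℕ → ℕ → ℕ) :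
    objective N lam v = lam 0 1 * (v 0 1 : ℝ) + objectiveTail N lam v := by
  rw [objective, objectiveTail, Nat.range_succ_eq_Icc_zero, sum_Icc_zero_eq_add_sum_Icc_one,
    add_assoc]

variable (hlam : ∀ n, n ≤ N → 0 ≤ lam n 1 ∧ 0 ≤ lam n 2)
include hlam

lemma objectiveTail_nonneg (v : ℕ → ℕ → ℕ) : 0 ≤ objectiveTail N lam v := by
  refine add_nonneg (mul_nonneg (hlam 0 N.zero_le).2 (Nat.cast_nonneg _)) (sum_nonneg ?_)
  intro n hn
  obtain ⟨hl1, hl2⟩ := hlam n (mem_Icc.1 hn).2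
  exact add_nonneg (mul_nonneg hl1 (Nat.cast_nonneg _)) (mul_nonneg hl2 (Nat.cast_nonneg _))

lemma objectiveTail_le {C : ℕ} {v : ℕ → ℕ → ℕ} (hv : ∀ n, n ≤ N → v n 1 ≤ C ∧ v n 2 ≤ C) :
    objectiveTail N lam v ≤
      (C : ℝ) * ((∑ n ∈ Icc 0 N, lam n 2) + ∑ n ∈ Icc 1 N, lam n 1) := by
  have hterm : ∀ n k, n ≤ N → (k = 1 ∨ k = 2) → lam n k * (v n k : ℝ) ≤ C * lam n k := by
    rintro n k hn (rfl | rfl)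
    · rw [mul_comm]
      exact mul_le_mul_of_nonneg_right (by exact_mod_cast (hv n hn).1) (hlam n hn).1
    · rw [mul_comm]
      exact mul_le_mul_of_nonneg_right (by exact_mod_cast (hv n hn).2) (hlam n hn).2
  have htail : ∑ n ∈ Icc 1 N, (lam n 1 * (v n 1 : ℝ) + lam n 2 * (v n 2 : ℝ)) ≤
      ∑ n ∈ Icc 1 N, (C * lam n 1 + C * lam n 2) := by
    refine sum_le_sum fun n hn => ?_
    have hn := (mem_Icc.1 hn).2
    exact add_le_add (hterm n 1 hn (.inl rfl)) (hterm n 2 hn (.inr rfl))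
  calc objectiveTail N lam v
      ≤ C * lam 0 2 + ∑ n ∈ Icc 1 N, (C * lam n 1 + C * lam n 2) :=
        add_le_add (hterm 0 2 N.zero_le (.inr rfl)) htail
    _ = C * ((∑ n ∈ Icc 0 N, lam n 2) + ∑ n ∈ Icc 1 N, lam n 1) := by
        rw [sum_Icc_zero_eq_add_sum_Icc_one, sum_add_distrib, ← mul_sum, ← mul_sum]
        ring

end Objective

theorem maximizer_maximizes_base_layers_link1_general
    (C N : ℕ)
    (lam : ℕ → ℕ → ℝ) (hlam : ∀ n, n ≤ N → 0 ≤ lam n 1 ∧ 0 ≤ lam n 2)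
    (hcond : lam 0 1 > (C : ℝ) *
      ((∑ n ∈ Finset.Icc 0 N, lam n 2) + ∑ n ∈ Finset.Icc 1 N, lam n 1))
    (V : Finset (ℕ → ℕ → ℕ)) (hV : V.Nonempty)
    (hbound : ∀ v ∈ V, ∀ n, n ≤ N → v n 1 ≤ C ∧ v n 2 ≤ C)
    (vstar : ℕ → ℕ → ℕ) (hmem : vstar ∈ V)
    (hmax : ∀ v ∈ V,
      (∑ n ∈ Finset.range (N + 1), (lam n 1 * (v n 1 : ℝ) + lam n 2 * (v n 2 : ℝ))) ≤
      (∑ n ∈ Finset.range (N + 1),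
        (lam n 1 * (vstar n 1 : ℝ) + lam n 2 * (vstar n 2 : ℝ)))) :
    vstar 0 1 = V.sup' hV (fun v => v 0 1) := by
  refine le_antisymm (V.le_sup' (fun v => v 0 1) hmem) (V.sup'_le hV _ fun v hv => ?_)
  have hf : objective N lam v ≤ objective N lam vstar := hmax v hv
  rw [objective_eq_add_objectiveTail, objective_eq_add_objectiveTail] at hf
  exact Nat.le_of_mul_add_le_mul_add (hlam 0 N.zero_le).1 (objectiveTail_nonneg hlam v)
    (objectiveTail_le hlam (hbound vstar hmem)) hcond hf

/-- Under the paper's condition (2) with `a = 0`, any maximizer of the weighted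
objective `f(v) = ∑_{n=0}^N (λ_n^1 v(n,1) + λ_n^2 v(n,2))` over a nonempty finite
set `V` of count vectors (entries at most `C`) fetches the maximum possible number of
base layers over the preferred link: `v*(0,1) = max_{v ∈ V} v(0,1)`. -/
theorem maximizer_maximizes_base_layers_link1
    (C N : ℕ) (hC : 1 ≤ C)
    (lam : ℕ → ℕ → ℝ) (hlam : ∀ n, n ≤ N → 0 ≤ lam n 1 ∧ 0 ≤ lam n 2)
    (hcond : lam 0 1 > (C : ℝ) *
      ((∑ n ∈ Finset.Icc 0 N, lam n 2) + ∑ n ∈ Finset.Icc 1 N, lam n 1))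
    (V : Finset (ℕ → ℕ → ℕ)) (hV : V.Nonempty)
    (hbound : ∀ v ∈ V, ∀ n, n ≤ N → v n 1 ≤ C ∧ v n 2 ≤ C)
    (vstar : ℕ → ℕ → ℕ) (hmem : vstar ∈ V)
    (hmax : ∀ v ∈ V,
      (∑ n ∈ Finset.range (N + 1), (lam n 1 * (v n 1 : ℝ) + lam n 2 * (v n 2 : ℝ))) ≤
      (∑ n ∈ Finset.range (N + 1),
        (lam n 1 * (vstar n 1 : ℝ) + lam n 2 * (vstar n 2 : ℝ)))) :
    vstar 0 1 = V.sup' hV (fun v => v 0 1) :=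
  maximizer_maximizes_base_layers_link1_general C N lam hlam hcond V hV hbound vstar hmem hmax
end

section
/- Assume there exists t ∈ ℕ with C·Y ≤ R(t). Then for every stall duration δ ∈ ℕ, the full set {1,…,C} is schedulable with deadlines d_δ(i) = (i−1)·L + s + δ if and only if i·Y ≤ R((i−1)·L + s + δ) for every i ∈ {1,…,C}. Consequently the set {δ ∈ ℕ : i·Y ≤ R((i−1)·L + s + δ) for all i ∈ {1,…,C}} is nonempty, and its minimum is the minimum possible total stall duration for which all C chunks can be fetched by their deadlines. (Correctness of the no-skip forward scan: the minimum stall is characterized by the prefix bandwidth condition.) -/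
private lemma tele_sum (g : ℕ → ℝ) (n : ℕ) :
    ∑ i ∈ Finset.Icc 1 n, (g i - g (i - 1)) = g n - g 0 := by
  induction n with
  | zero => simp
  | succ n ih =>
      rw [Finset.sum_Icc_succ_top (Nat.succ_le_succ (Nat.zero_le n)), ih]
      simp only [Nat.add_sub_cancel]
      ring

private lemma min_tele {a b c c' : ℝ} (hab : a ≤ b) (hcc : c ≤ c') :
    min c b - min c a ≤ min c' b - min c' a := by
  rcases le_total c a with h | h
  · rw [min_eq_left h, min_eq_left (h.trans hab), sub_self]
    exact sub_nonneg.mpr (min_le_min le_rfl hab)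
  · rw [min_eq_right h, min_eq_right (h.trans hcc)]
    rcases le_total c' b with h' | h'
    · rw [min_eq_left (hcc.trans h'), min_eq_left h']; linarith
    · rw [min_eq_right h']
      have := min_le_right c b
      linarith

private lemma min_lip {a b c : ℝ} (hab : a ≤ b) :
    min c b - min c a ≤ b - a := by
  rcases le_total c a with h | h
  · rw [min_eq_left h, min_eq_left (h.trans hab)]; linarith
  · rw [min_eq_right h]
    have := min_le_right c b
    linarith

private lemma schedulable_of_prefix (C : ℕ) (Y : ℝ) (hY : 0 < Y)
    (B : ℕ → ℝ) (hB : ∀ j, 1 ≤ j → 0 ≤ B j) (d : ℕ → ℕ)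
    (hpref : ∀ i ∈ Finset.Icc 1 C,
      (i : ℝ) * Y ≤ ∑ j ∈ Finset.Icc 1 (d i), B j) :
    Schedulable C Y B d (Finset.Icc 1 C) := by
  set R : ℕ → ℝ := fun t => ∑ j ∈ Finset.Icc 1 t, B j with hRdef
  have hRmono : Monotone R := fun a b hab =>
    Finset.sum_le_sum_of_subset_of_nonneg (Finset.Icc_subset_Icc le_rfl hab)
      (fun j hj _ => hB j (Finset.mem_Icc.mp hj).1)
  have hR0 : R 0 = 0 := by simp [hRdef]
  have hRnn : ∀ t, 0 ≤ R t := fun t => hR0 ▸ hRmono (Nat.zero_le t)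
  have hRstep : ∀ k : ℕ, R (k + 1) = R k + B (k + 1) := fun k =>
    Finset.sum_Icc_succ_top (Nat.succ_le_succ (Nat.zero_le _)) B
  set f : ℕ → ℕ → ℝ := fun i j => min ((i : ℝ) * Y) (R j) with hfdef
  have hcmono : ∀ i : ℕ, ((i - 1 : ℕ) : ℝ) * Y ≤ (i : ℝ) * Y := fun i =>
    mul_le_mul_of_nonneg_right (Nat.cast_le.mpr (Nat.sub_le i 1)) hY.le
  refine ⟨fun i j => if i ∈ Finset.Icc 1 C ∧ j ∈ Finset.Icc 1 (d i)
      then (f i j - f i (j - 1)) - (f (i - 1) j - f (i - 1) (j - 1)) else 0,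
      ?_, ?_, ?_, ?_⟩
  · intro i j
    dsimp only
    split_ifs with h
    · have hab : R (j - 1) ≤ R j := hRmono (Nat.sub_le j 1)
      have := min_tele hab (hcmono i)
      simp only [hfdef]
      linarith
    · exact le_rfl
  · intro i j hij
    dsimp only
    split_ifs with h
    · exfalso
      obtain ⟨hiS, hj⟩ := h
      rcases hij with hiS' | hdj
      · exact hiS' hiS
      · exact absurd (Finset.mem_Icc.mp hj).2 (Nat.not_le.mpr hdj)
    · rfl
  · intro j hj
    have key : ∀ i ∈ Finset.Icc 1 C,
        (if i ∈ Finset.Icc 1 C ∧ j ∈ Finset.Icc 1 (d i)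
          then (f i j - f i (j - 1)) - (f (i - 1) j - f (i - 1) (j - 1)) else 0)
        = (fun i => f i j - f i (j - 1)) i - (fun i => f i j - f i (j - 1)) (i - 1) := by
      intro i hi
      split_ifs with h
      · ring
      · have hji : d i < j := by
          by_contra hle
          exact h ⟨hi, Finset.mem_Icc.mpr ⟨hj, Nat.le_of_not_lt hle⟩⟩
        have h1 : (i : ℝ) * Y ≤ R (j - 1) :=
          le_trans (hpref i hi) (hRmono (Nat.le_sub_one_of_lt hji))
        have h2 : ((i - 1 : ℕ) : ℝ) * Y ≤ R (j - 1) := le_trans (hcmono i) h1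
        have hj1 : (i : ℝ) * Y ≤ R j := h1.trans (hRmono (Nat.sub_le j 1))
        have hj2 : ((i - 1 : ℕ) : ℝ) * Y ≤ R j := h2.trans (hRmono (Nat.sub_le j 1))
        simp only [hfdef, min_eq_left h1, min_eq_left h2, min_eq_left hj1, min_eq_left hj2]
        ring
    rw [Finset.sum_congr rfl key, tele_sum (fun i => f i j - f i (j - 1)) C]
    have e0 : ∀ t, f 0 t = 0 := fun t => by
      simp only [hfdef, Nat.cast_zero, zero_mul]
      exact min_eq_left (hRnn t)
    have hlip := min_lip (c := (C : ℝ) * Y) (hRmono (Nat.sub_le j 1))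
    have hjstep : R j = R (j - 1) + B j := by
      have h := hRstep (j - 1)
      rwa [Nat.sub_add_cancel hj] at h
    have e0j : (0 : ℝ) ⊓ R j = 0 := min_eq_left (hRnn j)
    have e0j' : (0 : ℝ) ⊓ R (j - 1) = 0 := min_eq_left (hRnn (j - 1))
    simp only [hfdef, Nat.cast_zero, zero_mul, e0j, e0j']
    linarith
  · intro i hi
    have hkey : ∀ j ∈ Finset.Icc 1 (d i),
        (if i ∈ Finset.Icc 1 C ∧ j ∈ Finset.Icc 1 (d i)
          then (f i j - f i (j - 1)) - (f (i - 1) j - f (i - 1) (j - 1)) else 0)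
        = (fun j => f i j - f (i - 1) j) j - (fun j => f i j - f (i - 1) j) (j - 1) := by
      intro j hj
      rw [if_pos ⟨hi, hj⟩]
      ring
    rw [Finset.sum_congr rfl hkey, tele_sum (fun j => f i j - f (i - 1) j) (d i)]
    have h1 : f i (d i) = (i : ℝ) * Y := min_eq_left (hpref i hi)
    have h2 : f (i - 1) (d i) = ((i - 1 : ℕ) : ℝ) * Y :=
      min_eq_left (le_trans (hcmono i) (hpref i hi))
    have h3 : f i 0 = 0 := by
      simp only [hfdef, hR0]
      exact min_eq_right (mul_nonneg (Nat.cast_nonneg i) hY.le)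
    have h4 : f (i - 1) 0 = 0 := by
      simp only [hfdef, hR0]
      exact min_eq_right (mul_nonneg (Nat.cast_nonneg _) hY.le)
    have hi1 : 1 ≤ i := (Finset.mem_Icc.mp hi).1
    have hcast : ((i - 1 : ℕ) : ℝ) = (i : ℝ) - 1 := by
      rw [Nat.cast_sub hi1, Nat.cast_one]
    rw [h1, h2, h3, h4, hcast]
    ring

private lemma prefix_of_schedulable (C : ℕ) (Y : ℝ)
    (B : ℕ → ℝ) (d : ℕ → ℕ) (hdmono : Monotone d)
    (hsched : Schedulable C Y B d (Finset.Icc 1 C)) :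
    ∀ i ∈ Finset.Icc 1 C, (i : ℝ) * Y ≤ ∑ j ∈ Finset.Icc 1 (d i), B j := by
  obtain ⟨z, hz0, hzero, hcol, hrow⟩ := hsched
  intro i0 hi0
  obtain ⟨hi1, hiC⟩ := Finset.mem_Icc.mp hi0
  have step1 : (i0 : ℝ) * Y = ∑ _i ∈ Finset.Icc 1 i0, Y := by
    rw [Finset.sum_const, Nat.card_Icc]
    simp [Nat.add_sub_cancel]
  have step2 : ∀ i ∈ Finset.Icc 1 i0, Y = ∑ j ∈ Finset.Icc 1 (d i0), z i j := by
    intro i hi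
    have hiC' : i ∈ Finset.Icc 1 C := Finset.mem_Icc.mpr
      ⟨(Finset.mem_Icc.mp hi).1, le_trans (Finset.mem_Icc.mp hi).2 hiC⟩
    rw [← hrow i hiC']
    refine Finset.sum_subset
      (Finset.Icc_subset_Icc le_rfl (hdmono (Finset.mem_Icc.mp hi).2)) ?_
    intro j hj hj'
    refine hzero i j (Or.inr ?_)
    by_contra hle
    exact hj' (Finset.mem_Icc.mpr ⟨(Finset.mem_Icc.mp hj).1, Nat.le_of_not_lt hle⟩)
  calc (i0 : ℝ) * Y = ∑ i ∈ Finset.Icc 1 i0, ∑ j ∈ Finset.Icc 1 (d i0), z i j := by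
        rw [step1]; exact Finset.sum_congr rfl step2
    _ = ∑ j ∈ Finset.Icc 1 (d i0), ∑ i ∈ Finset.Icc 1 i0, z i j := Finset.sum_comm
    _ ≤ ∑ j ∈ Finset.Icc 1 (d i0), ∑ i ∈ Finset.Icc 1 C, z i j :=
        Finset.sum_le_sum (fun j _ => Finset.sum_le_sum_of_subset_of_nonneg
          (Finset.Icc_subset_Icc le_rfl hiC) (fun i _ _ => hz0 i j))
    _ ≤ ∑ j ∈ Finset.Icc 1 (d i0), B j :=
        Finset.sum_le_sum (fun j hj => hcol j (Finset.mem_Icc.mp hj).1)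

/-- Correctness of the no-skip forward scan. Assume the total cumulative bandwidth
eventually suffices for all `C` chunks. Then for every stall duration `δ`, the full
set `{1,…,C}` is schedulable with deadlines `d_δ(i) = (i−1)L + s + δ` iff
`i·Y ≤ R((i−1)L + s + δ)` for every `i ∈ {1,…,C}`; the set of stall durations
satisfying this prefix condition is nonempty, and its minimum is the minimum possible
total stall duration for which all `C` chunks can be fetched by their deadlines. -/
theorem no_skip_forward_scan_correct
    (C : ℕ) (hC : 1 ≤ C) (Y : ℝ) (hY : 0 < Y)
    (B : ℕ → ℝ) (hB : ∀ j, 1 ≤ j → 0 ≤ B j)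
    (L s : ℕ) (hL : 1 ≤ L) (hs : 1 ≤ s)
    (hcap : ∃ t : ℕ, (C : ℝ) * Y ≤ ∑ j ∈ Finset.Icc 1 t, B j) :
    (∀ δ : ℕ,
      Schedulable C Y B (fun i => (i - 1) * L + s + δ) (Finset.Icc 1 C) ↔
      ∀ i ∈ Finset.Icc 1 C,
        (i : ℝ) * Y ≤ ∑ j ∈ Finset.Icc 1 ((i - 1) * L + s + δ), B j) ∧
    {δ : ℕ | ∀ i ∈ Finset.Icc 1 C,
        (i : ℝ) * Y ≤ ∑ j ∈ Finset.Icc 1 ((i - 1) * L + s + δ), B j}.Nonempty ∧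
    IsLeast
      {δ : ℕ | Schedulable C Y B (fun i => (i - 1) * L + s + δ) (Finset.Icc 1 C)}
      (sInf {δ : ℕ | ∀ i ∈ Finset.Icc 1 C,
        (i : ℝ) * Y ≤ ∑ j ∈ Finset.Icc 1 ((i - 1) * L + s + δ), B j}) := by
  have hiff : ∀ δ : ℕ,
      Schedulable C Y B (fun i => (i - 1) * L + s + δ) (Finset.Icc 1 C) ↔
      ∀ i ∈ Finset.Icc 1 C,
        (i : ℝ) * Y ≤ ∑ j ∈ Finset.Icc 1 ((i - 1) * L + s + δ), B j := by
    intro δ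
    constructor
    · intro h
      refine prefix_of_schedulable C Y B _ ?_ h
      intro a b hab
      exact Nat.add_le_add_right (Nat.add_le_add_right
        (Nat.mul_le_mul_right L (Nat.sub_le_sub_right hab 1)) s) δ
    · intro h
      exact schedulable_of_prefix C Y hY B hB _ h
  obtain ⟨t, ht⟩ := hcap
  have htmem : t ∈ {δ : ℕ | ∀ i ∈ Finset.Icc 1 C,
      (i : ℝ) * Y ≤ ∑ j ∈ Finset.Icc 1 ((i - 1) * L + s + δ), B j} := by
    intro i hi
    obtain ⟨hi1, hiC⟩ := Finset.mem_Icc.mp hi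
    have h1 : (i : ℝ) * Y ≤ (C : ℝ) * Y :=
      mul_le_mul_of_nonneg_right (Nat.cast_le.mpr hiC) hY.le
    have h2 : t ≤ (i - 1) * L + s + t := by omega
    refine h1.trans (ht.trans ?_)
    exact Finset.sum_le_sum_of_subset_of_nonneg (Finset.Icc_subset_Icc le_rfl h2)
      (fun j hj _ => hB j (Finset.mem_Icc.mp hj).1)
  have hne : {δ : ℕ | ∀ i ∈ Finset.Icc 1 C,
      (i : ℝ) * Y ≤ ∑ j ∈ Finset.Icc 1 ((i - 1) * L + s + δ), B j}.Nonempty := ⟨t, htmem⟩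
  refine ⟨hiff, hne, ?_, ?_⟩
  · exact (hiff _).mpr (Nat.sInf_mem hne)
  · intro x hx
    exact Nat.sInf_le ((hiff x).mp hx)
end

section
/- Let A = max_{1 ≤ i ≤ C} max(0, i − c¹(i) − c²(i)) and m* = max_{1 ≤ i ≤ C} max(0, i − A − c¹(i)). Then there exists a valid assignment (S¹, S²) with S¹ ∪ S² = {A+1,…,C} and |S²| = m* such that for every valid assignment (T¹, T²) with T¹ ∪ T² = {A+1,…,C} and |T²| = m*, and every i ∈ {1,…,C}, one has |T² ∩ {1,…,i}| ≤ |S² ∩ {1,…,i}| (equivalently, the k-th smallest element of S² is at most the k-th smallest element of T² for every k ≤ m*, and |S¹ ∩ {1,…,i}| ≤ |T¹ ∩ {1,…,i}| for every i). (Lemma 6 of the paper: assigning the earliest feasible chunks to the less preferable link leaves the largest possible link-1 capacity before every deadline for fetching enhancement layers.) -/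
/-- The greedy prefix-count function: `greedyG A m c2 i` is the number of chunks among
`{A+1,…,i}` that the greedy strategy (assign earliest feasible chunks to link 2,
up to `m` in total) has assigned to link 2 by time `i`. -/
def greedyG (A m : ℕ) (c2 : ℕ → ℕ) : ℕ → ℕ
  | 0 => 0
  | i + 1 => if i + 1 ≤ A then 0 else min (min (greedyG A m c2 i + 1) (c2 (i + 1))) m

lemma greedyG_zero (A m : ℕ) (c2 : ℕ → ℕ) {i : ℕ} (h : i ≤ A) : greedyG A m c2 i = 0 := by
  cases i with
  | zero => rfl
  | succ n => simp [greedyG, h]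

lemma greedyG_succ (A m : ℕ) (c2 : ℕ → ℕ) {i : ℕ} (h : ¬ (i + 1 ≤ A)) :
    greedyG A m c2 (i + 1) = min (min (greedyG A m c2 i + 1) (c2 (i + 1))) m := by
  simp [greedyG, h]

lemma greedyG_le_m (A m : ℕ) (c2 : ℕ → ℕ) (i : ℕ) : greedyG A m c2 i ≤ m := by
  cases i with
  | zero => simp [greedyG]
  | succ n => simp only [greedyG]; split <;> omega

lemma greedyG_le_c2 (A m : ℕ) (c2 : ℕ → ℕ) {i : ℕ} (h : A + 1 ≤ i) :
    greedyG A m c2 i ≤ c2 i := by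
  cases i with
  | zero => omega
  | succ n => rw [greedyG_succ A m c2 (by omega)]; omega

lemma greedyG_succ_le (A m : ℕ) (c2 : ℕ → ℕ) (i : ℕ) :
    greedyG A m c2 (i + 1) ≤ greedyG A m c2 i + 1 := by
  simp only [greedyG]; split <;> omega

/-- Lemma 6 of the paper: with `A = max_{1≤i≤C} max(0, i − c¹(i) − c²(i))` and
`m* = max_{1≤i≤C} max(0, i − A − c¹(i))`, there is a valid assignment `(S¹, S²)` with
`S¹ ∪ S² = {A+1,…,C}` and `|S²| = m*` which assigns the earliest feasible chunks to
the less preferable link: for every valid assignment `(T¹, T²)` with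
`T¹ ∪ T² = {A+1,…,C}` and `|T²| = m*`, and every `i ∈ {1,…,C}`,
`|T² ∩ {1,…,i}| ≤ |S² ∩ {1,…,i}|`. -/
theorem earliest_chunks_to_link2
    (C : ℕ) (hC : 1 ≤ C) (c1 c2 : ℕ → ℕ)
    (hc1 : ∀ i i', 1 ≤ i → i ≤ i' → i' ≤ C → c1 i ≤ c1 i')
    (hc2 : ∀ i i', 1 ≤ i → i ≤ i' → i' ≤ C → c2 i ≤ c2 i')
    (A : ℕ) (hA : A = (Finset.Icc 1 C).sup (fun i => i - (c1 i + c2 i)))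
    (m : ℕ) (hm : m = (Finset.Icc 1 C).sup (fun i => i - A - c1 i)) :
    ∃ S1 S2 : Finset ℕ, ValidAssignment C c1 c2 S1 S2 ∧
      S1 ∪ S2 = Finset.Icc (A + 1) C ∧ S2.card = m ∧
      ∀ T1 T2 : Finset ℕ, ValidAssignment C c1 c2 T1 T2 →
        T1 ∪ T2 = Finset.Icc (A + 1) C → T2.card = m →
        ∀ i ∈ Finset.Icc 1 C,
          (T2 ∩ Finset.Icc 1 i).card ≤ (S2 ∩ Finset.Icc 1 i).card := by
  have hAle : ∀ j, 1 ≤ j → j ≤ C → j - (c1 j + c2 j) ≤ A := by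
    intro j h1 h2
    rw [hA]
    exact Finset.le_sup (f := fun i => i - (c1 i + c2 i)) (Finset.mem_Icc.mpr ⟨h1, h2⟩)
  have hmle : ∀ j, 1 ≤ j → j ≤ C → j - A - c1 j ≤ m := by
    intro j h1 h2
    rw [hm]
    exact Finset.le_sup (f := fun i => i - A - c1 i) (Finset.mem_Icc.mpr ⟨h1, h2⟩)
  have hAC : A ≤ C := by
    rw [hA]
    apply Finset.sup_le
    intro i hi
    rw [Finset.mem_Icc] at hi
    omega
  have hmC : m ≤ C - A := by
    rw [hm]
    apply Finset.sup_le
    intro i hi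
    rw [Finset.mem_Icc] at hi
    omega
  -- key capacity fact: link 2 can still deliver `m` chunks after any deadline `j`
  have hK : ∀ j, A + 1 ≤ j → j ≤ C → m ≤ c2 j + (C - j) := by
    intro j hj1 hj2
    rw [hm]
    apply Finset.sup_le
    intro i hi
    rw [Finset.mem_Icc] at hi
    rcases le_total i j with h | h
    · have h2 : c2 i ≤ c2 j := hc2 i j hi.1 h hj2
      have h3 := hAle i hi.1 hi.2
      omega
    · have h2 : c1 j ≤ c1 i := hc1 j i (by omega) h hi.2
      have h3 := hAle j (by omega) hj2
      omega
  -- monotone step of the greedy count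
  have hstep : ∀ i, i + 1 ≤ C → greedyG A m c2 i ≤ greedyG A m c2 (i + 1) := by
    intro i hiC
    by_cases h : i + 1 ≤ A
    · rw [greedyG_zero A m c2 (by omega : i ≤ A)]; omega
    · rw [greedyG_succ A m c2 h]
      have h1 : greedyG A m c2 i ≤ m := greedyG_le_m A m c2 i
      have h2 : greedyG A m c2 i ≤ c2 (i + 1) := by
        by_cases hiA : i ≤ A
        · rw [greedyG_zero A m c2 hiA]; omega
        · exact le_trans (greedyG_le_c2 A m c2 (by omega))
            (hc2 i (i + 1) (by omega) (by omega) hiC)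
      omega
  -- the balance inequality guaranteeing link-1 feasibility
  have hbal : ∀ i, i ≤ C → i - A ≤ greedyG A m c2 i + c1 i := by
    intro i
    induction i with
    | zero => omega
    | succ n ih =>
      intro hnC
      by_cases h : n + 1 ≤ A
      · omega
      · rw [greedyG_succ A m c2 h]
        have h1 := hmle (n + 1) (by omega) hnC
        have h2 := hAle (n + 1) (by omega) hnC
        have h3 : n - A ≤ greedyG A m c2 n + c1 n := ih (by omega)
        rcases Nat.eq_zero_or_pos n with h0 | h0
        · subst h0
          have hg0 : greedyG A m c2 0 = 0 := rfl
          omega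
        · have h4 : c1 n ≤ c1 (n + 1) := hc1 n (n + 1) h0 (by omega) hnC
          omega
  -- the greedy count reaches `m` at time `C`
  have hreach : ∀ i, A ≤ i → i ≤ C → m ≤ greedyG A m c2 i + (C - i) := by
    intro i
    induction i with
    | zero =>
      intro hA0 _
      rw [greedyG_zero A m c2 (by omega)]
      omega
    | succ n ih =>
      intro hAn hnC
      by_cases h : n + 1 ≤ A
      · rw [greedyG_zero A m c2 (by omega : n + 1 ≤ A)]
        omega
      · rw [greedyG_succ A m c2 h]
        have hk := hK (n + 1) (by omega) hnC
        by_cases hAn' : A ≤ n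
        · have := ih hAn' (by omega)
          omega
        · have hA1 : A = n + 1 := by omega
          rw [greedyG_zero A m c2 (by omega : n ≤ A)]
          omega
  have hgC : greedyG A m c2 C = m :=
    le_antisymm (greedyG_le_m A m c2 C) (by have := hreach C (by omega) (le_refl C); omega)
  -- the greedy set
  set S2 : Finset ℕ := (Finset.Icc (A + 1) C).filter
      (fun i => greedyG A m c2 i = greedyG A m c2 (i - 1) + 1) with hS2
  set S1 : Finset ℕ := Finset.Icc (A + 1) C \ S2 with hS1
  have hS2sub : S2 ⊆ Finset.Icc (A + 1) C := Finset.filter_subset _ _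
  -- prefix counts of the greedy set
  have hcard : ∀ i, i ≤ C → (S2 ∩ Finset.Icc 1 i).card = greedyG A m c2 i := by
    intro i
    induction i with
    | zero => simp [greedyG]
    | succ n ih =>
      intro hnC
      have hins : Finset.Icc 1 (n + 1) = insert (n + 1) (Finset.Icc 1 n) :=
        (Finset.insert_Icc_right_eq_Icc_add_one (by omega)).symm
      rw [hins]
      by_cases hx : (n + 1) ∈ S2
      · rw [Finset.inter_insert_of_mem hx, Finset.card_insert_of_notMem (by simp),
          ih (by omega)]
        have : greedyG A m c2 (n + 1) = greedyG A m c2 n + 1 := by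
          have := (Finset.mem_filter.mp hx).2
          simpa using this
        omega
      · rw [Finset.inter_insert_of_notMem hx, ih (by omega)]
        by_cases h : n + 1 ≤ A
        · rw [greedyG_zero A m c2 h, greedyG_zero A m c2 (by omega : n ≤ A)]
        · have hmem : (n + 1) ∈ Finset.Icc (A + 1) C := Finset.mem_Icc.mpr ⟨by omega, hnC⟩
          have hne : ¬ (greedyG A m c2 (n + 1) = greedyG A m c2 n + 1) := by
            intro hcontra
            exact hx (Finset.mem_filter.mpr ⟨hmem, by simpa using hcontra⟩)
          have h1 := hstep n hnC
          have h2 := greedyG_succ_le A m c2 n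
          omega
  have hS2card : S2.card = m := by
    have h1 : S2 ∩ Finset.Icc 1 C = S2 := by
      apply Finset.inter_eq_left.mpr
      exact hS2sub.trans (Finset.Icc_subset_Icc (by omega) (le_refl C))
    have := hcard C (le_refl C)
    rw [h1] at this
    rw [this, hgC]
  -- intersecting the window with a prefix
  have hwin : ∀ i, i ≤ C → Finset.Icc (A + 1) C ∩ Finset.Icc 1 i = Finset.Icc (A + 1) i := by
    intro i hiC
    ext x
    simp only [Finset.mem_inter, Finset.mem_Icc]
    omega
  refine ⟨S1, S2, ⟨?_, ?_, ?_, ?_, ?_⟩, ?_, hS2card, ?_⟩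
  · exact (Finset.sdiff_subset).trans (Finset.Icc_subset_Icc (by omega) (le_refl C))
  · exact hS2sub.trans (Finset.Icc_subset_Icc (by omega) (le_refl C))
  · exact Finset.sdiff_disjoint
  · -- link-1 validity
    intro i hi
    rw [Finset.mem_Icc] at hi
    have hinter : S1 ∩ Finset.Icc 1 i
        = (Finset.Icc (A + 1) C ∩ Finset.Icc 1 i) \ (S2 ∩ Finset.Icc 1 i) := by
      rw [hS1]
      ext x
      simp only [Finset.mem_inter, Finset.mem_sdiff, Finset.mem_Icc]
      tauto
    rw [hinter, Finset.card_sdiff_of_subset (Finset.inter_subset_inter_right hS2sub), hwin i hi.2,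
      hcard i hi.2, Nat.card_Icc]
    have := hbal i hi.2
    omega
  · -- link-2 validity
    intro i hi
    rw [Finset.mem_Icc] at hi
    rw [hcard i hi.2]
    by_cases h : i ≤ A
    · rw [greedyG_zero A m c2 h]; omega
    · exact greedyG_le_c2 A m c2 (by omega)
  · exact Finset.sdiff_union_of_subset hS2sub
  · -- optimality of the greedy set
    intro T1 T2 hT hTU hTcard i hi
    rw [Finset.mem_Icc] at hi
    obtain ⟨-, hT2sub, -, -, hT2c⟩ := hT
    have hT2win : T2 ⊆ Finset.Icc (A + 1) C := by
      rw [← hTU]; exact Finset.subset_union_right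
    rw [hcard i hi.2]
    -- prove the prefix bound by induction
    have key : ∀ j, j ≤ C → (T2 ∩ Finset.Icc 1 j).card ≤ greedyG A m c2 j := by
      intro j
      induction j with
      | zero => simp [greedyG]
      | succ n ih =>
        intro hnC
        have hins : Finset.Icc 1 (n + 1) = insert (n + 1) (Finset.Icc 1 n) :=
          (Finset.insert_Icc_right_eq_Icc_add_one (by omega)).symm
        by_cases h : n + 1 ≤ A
        · have hempty : T2 ∩ Finset.Icc 1 (n + 1) = ∅ := by
            apply Finset.eq_empty_of_forall_notMem
            intro x hx
            rw [Finset.mem_inter, Finset.mem_Icc] at hx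
            have := Finset.mem_Icc.mp (hT2win hx.1)
            omega
          rw [hempty]
          simp
        · rw [greedyG_succ A m c2 h]
          have h1 : (T2 ∩ Finset.Icc 1 (n + 1)).card ≤ (T2 ∩ Finset.Icc 1 n).card + 1 := by
            rw [hins]
            calc (T2 ∩ insert (n + 1) (Finset.Icc 1 n)).card
                ≤ (insert (n + 1) (T2 ∩ Finset.Icc 1 n)).card :=
                  Finset.card_le_card (by
                    intro x hx
                    rw [Finset.mem_inter, Finset.mem_insert] at hx
                    rw [Finset.mem_insert, Finset.mem_inter]
                    tauto)
              _ ≤ (T2 ∩ Finset.Icc 1 n).card + 1 := Finset.card_insert_le _ _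
          have h2 : (T2 ∩ Finset.Icc 1 (n + 1)).card ≤ c2 (n + 1) :=
            hT2c (n + 1) (Finset.mem_Icc.mpr ⟨by omega, hnC⟩)
          have h3 : (T2 ∩ Finset.Icc 1 (n + 1)).card ≤ m := by
            rw [← hTcard]
            exact Finset.card_le_card Finset.inter_subset_left
          have h4 := ih (by omega)
          omega
    exact key i hi.2
end

section
/- Fix an integer C ≥ 1, per-chunk demands w : {1,…,C} → ℝ with w(i) ≥ 0, a bandwidth function B : ℕ → ℝ with B(j) ≥ 0 and cumulative bandwidth R(t) = ∑_{j=1}^{t} B(j), and a strictly increasing deadline function d : {1,…,C} → ℕ with d(i) ≥ 1. Then there exists an allocation z : {1,…,C} × ℕ → ℝ with z(i,j) ≥ 0, z(i,j) = 0 whenever j > d(i), ∑_{i=1}^{C} z(i,j) ≤ B(j) for every j ≥ 1, and ∑_{j=1}^{d(i)} z(i,j) = w(i) for every i, if and only if ∑_{i'=1}^{i} w(i') ≤ R(d(i)) for every i ∈ {1,…,C}. (Generalized prefix feasibility characterization with heterogeneous per-chunk demands; this covers variable-bit-rate chunks and the layered residual-bandwidth scheduling of the enhancement layers used in the optimality proofs.)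 -/
/-!
Sufficiency is witnessed by the earliest-deadline-first schedule. Lay the demands end to end on
a line, chunk `i` occupying `[W (i-1), W i]` with `W` the cumulative demand, and lay the slots
end to end likewise, slot `j` occupying `[R (j-1), R j]`. Chunk `i` receives in slot `j` the
length of the overlap of its interval with the slot's, which is the mixed second difference of
`min (W i) (R j)`. Supermodularity of `min` makes this nonnegative, the sums over chunks and
over slots telescope, and `W i ≤ R (d i)` puts chunk `i` entirely before its deadline.
Necessity is the usual counting: the first `i` chunks are delivered within the first `d i` slots.
-/

open Finset

section MinDifferences

variable {α : Type*} [AddCommGroup α] [LinearOrder α] [IsOrderedAddMonoid α]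

theorem min_sub_min_le_min_sub_min {a b r s : α} (hab : a ≤ b) (hrs : r ≤ s) :
    min a s - min a r ≤ min b s - min b r := by
  grind

theorem min_sub_min_le_sub (a : α) {r s : α} (hrs : r ≤ s) : min a s - min a r ≤ s - r := by
  grind

end MinDifferences

theorem min_sub_min_eq_zero_of_le {α : Type*} [AddGroup α] [LinearOrder α] {a r s : α}
    (har : a ≤ r) (hrs : r ≤ s) : min a s - min a r = 0 := by
  rw [min_eq_left har, min_eq_left (har.trans hrs), sub_self]

theorem Finset.sum_Icc_one_sub_pred {M : Type*} [AddCommGroup M] (f : ℕ → M) (n : ℕ) :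
    ∑ i ∈ Icc 1 n, (f i - f (i - 1)) = f n - f 0 := by
  induction n with
  | zero => simp
  | succ n ih =>
    rw [sum_Icc_succ_top (Nat.le_add_left 1 n), ih, Nat.add_sub_cancel]
    abel

def cumulativeSum (f : ℕ → ℝ) (n : ℕ) : ℝ := ∑ k ∈ Icc 1 n, f k

namespace cumulativeSum

@[simp]
theorem zero (f : ℕ → ℝ) : cumulativeSum f 0 = 0 := by simp [cumulativeSum]

theorem sub_pred (f : ℕ → ℝ) {n : ℕ} (hn : 1 ≤ n) :
    cumulativeSum f n - cumulativeSum f (n - 1) = f n := by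
  obtain ⟨m, rfl⟩ := Nat.exists_eq_add_of_le' hn
  rw [cumulativeSum, sum_Icc_succ_top (Nat.le_add_left 1 m), Nat.add_sub_cancel, cumulativeSum,
    add_sub_cancel_left]

theorem mono {f : ℕ → ℝ} {m n : ℕ} (hf : ∀ k, 1 ≤ k → k ≤ n → 0 ≤ f k) (hmn : m ≤ n) :
    cumulativeSum f m ≤ cumulativeSum f n :=
  sum_le_sum_of_subset_of_nonneg (Icc_subset_Icc_right hmn) fun k hk _ =>
    hf k (mem_Icc.mp hk).1 (mem_Icc.mp hk).2

end cumulativeSum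

/-- With `F`, `G` the cumulative demand and supply, this is the amount of chunk `i` sent in slot
`j` by the earliest-deadline-first schedule: the length of `[F (i-1), F i] ∩ [G (j-1), G j]`. -/
def edfAllocation (F G : ℕ → ℝ) (i j : ℕ) : ℝ :=
  min (F i) (G j) - min (F i) (G (j - 1)) - (min (F (i - 1)) (G j) - min (F (i - 1)) (G (j - 1)))

namespace edfAllocation

variable {F G : ℕ → ℝ} {i j : ℕ}

theorem nonneg (hF : F (i - 1) ≤ F i) (hG : G (j - 1) ≤ G j) : 0 ≤ edfAllocation F G i j :=
  sub_nonneg.mpr (min_sub_min_le_min_sub_min hF hG)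

theorem eq_zero_of_eq (hF : F i = F (i - 1)) : edfAllocation F G i j = 0 := by
  rw [edfAllocation, hF, sub_self]

theorem eq_zero_of_le (hF : F (i - 1) ≤ F i) (hG : G (j - 1) ≤ G j) (hFG : F i ≤ G (j - 1)) :
    edfAllocation F G i j = 0 := by
  rw [edfAllocation, min_sub_min_eq_zero_of_le hFG hG,
    min_sub_min_eq_zero_of_le (hF.trans hFG) hG, sub_self]

theorem sum_chunks_le (n : ℕ) (hG : G (j - 1) ≤ G j) (hF : F 0 ≤ G (j - 1)) :
    ∑ i ∈ Icc 1 n, edfAllocation F G i j ≤ G j - G (j - 1) := by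
  have telescope := sum_Icc_one_sub_pred (fun i => min (F i) (G j) - min (F i) (G (j - 1))) n
  simp only [min_sub_min_eq_zero_of_le hF hG, sub_zero] at telescope
  unfold edfAllocation
  rw [telescope]
  exact min_sub_min_le_sub _ hG

theorem sum_slots_eq (m : ℕ) (hG : G 0 ≤ F (i - 1)) (hF : F (i - 1) ≤ F i)
    (hFG : F i ≤ G m) : ∑ j ∈ Icc 1 m, edfAllocation F G i j = F i - F (i - 1) := by
  have telescope := sum_Icc_one_sub_pred (fun j => min (F i) (G j) - min (F (i - 1)) (G j)) m
  rw [min_eq_right (hG.trans hF), min_eq_right hG, sub_self, sub_zero,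
    min_eq_left hFG, min_eq_left (hF.trans hFG)] at telescope
  rw [← telescope]
  refine sum_congr rfl fun j _ => ?_
  rw [edfAllocation]
  abel

end edfAllocation

theorem cumulativeSum_le_of_allocation {C : ℕ} {w B : ℕ → ℝ} {d : ℕ → ℕ}
    {z : ℕ → ℕ → ℝ} (hd : MonotoneOn d (Icc 1 C)) (hz : ∀ i j, 0 ≤ z i j)
    (hzB : ∀ j, 1 ≤ j → ∑ i ∈ Icc 1 C, z i j ≤ B j)
    (hzw : ∀ i ∈ Icc 1 C, ∑ j ∈ Icc 1 (d i), z i j = w i) {i : ℕ} (hi : i ∈ Icc 1 C) :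
    cumulativeSum w i ≤ cumulativeSum B (d i) := by
  have hiC : Icc 1 i ⊆ Icc 1 C := Icc_subset_Icc_right (mem_Icc.mp hi).2
  calc ∑ i' ∈ Icc 1 i, w i'
      = ∑ i' ∈ Icc 1 i, ∑ j ∈ Icc 1 (d i'), z i' j :=
        (sum_congr rfl fun i' hi' => hzw i' (hiC hi')).symm
    _ ≤ ∑ i' ∈ Icc 1 i, ∑ j ∈ Icc 1 (d i), z i' j :=
        sum_le_sum fun i' hi' => sum_le_sum_of_subset_of_nonneg
          (Icc_subset_Icc_right (hd (hiC hi') hi (mem_Icc.mp hi').2)) fun j _ _ => hz i' j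
    _ = ∑ j ∈ Icc 1 (d i), ∑ i' ∈ Icc 1 i, z i' j := sum_comm
    _ ≤ ∑ j ∈ Icc 1 (d i), ∑ i' ∈ Icc 1 C, z i' j :=
        sum_le_sum fun j _ => sum_le_sum_of_subset_of_nonneg hiC fun i' _ _ => hz i' j
    _ ≤ ∑ j ∈ Icc 1 (d i), B j := sum_le_sum fun j hj => hzB j (mem_Icc.mp hj).1

theorem exists_allocation_of_cumulativeSum_le {C : ℕ} {w B : ℕ → ℝ} {d : ℕ → ℕ}
    (hw : ∀ i, 1 ≤ i → i ≤ C → 0 ≤ w i) (hB : ∀ j, 1 ≤ j → 0 ≤ B j)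
    (hwB : ∀ i ∈ Icc 1 C, cumulativeSum w i ≤ cumulativeSum B (d i)) :
    ∃ z : ℕ → ℕ → ℝ, (∀ i j, 0 ≤ z i j) ∧ (∀ i j, d i < j → z i j = 0) ∧
      (∀ j, 1 ≤ j → ∑ i ∈ Icc 1 C, z i j ≤ B j) ∧
      (∀ i ∈ Icc 1 C, ∑ j ∈ Icc 1 (d i), z i j = w i) := by
  -- capping at `C` (and `0 - 1 = 0`) makes chunk `0` and the chunks beyond `C` empty
  set F := fun i => cumulativeSum w (min i C)
  set G := cumulativeSum B
  have hF : Monotone F := fun m n hmn =>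
    cumulativeSum.mono (fun k hk hkC => hw k hk (hkC.trans (min_le_right n C)))
      (min_le_min_right C hmn)
  have hG : Monotone G := fun _ _ hmn => cumulativeSum.mono (fun k hk _ => hB k hk) hmn
  have hFC : ∀ i ≤ C, F i = cumulativeSum w i := fun i hi => by simp only [F, min_eq_left hi]
  refine ⟨edfAllocation F G, fun i j => edfAllocation.nonneg (hF (i.sub_le 1)) (hG (j.sub_le 1)),
    fun i j hj => ?_, fun j hj => ?_, fun i hi => ?_⟩
  · by_cases hi : i ∈ Icc 1 C
    · exact edfAllocation.eq_zero_of_le (hF (i.sub_le 1)) (hG (j.sub_le 1))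
        ((hFC i (mem_Icc.mp hi).2 ▸ hwB i hi).trans (hG (by omega)))
    · refine edfAllocation.eq_zero_of_eq (congrArg (cumulativeSum w) ?_)
      simp only [mem_Icc] at hi
      omega
  · have hF0 : F 0 ≤ G (j - 1) := by simpa [F, G] using hG (Nat.zero_le (j - 1))
    calc ∑ i ∈ Icc 1 C, edfAllocation F G i j
        ≤ G j - G (j - 1) := edfAllocation.sum_chunks_le C (hG (j.sub_le 1)) hF0
      _ = B j := cumulativeSum.sub_pred B hj
  · obtain ⟨hi1, hiC⟩ := mem_Icc.mp hi
    have hG0 : G 0 ≤ F (i - 1) := by simpa [F, G] using hF (Nat.zero_le (i - 1))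
    rw [edfAllocation.sum_slots_eq _ hG0 (hF (i.sub_le 1)) (hFC i hiC ▸ hwB i hi),
      hFC i hiC, hFC (i - 1) (by omega)]
    exact cumulativeSum.sub_pred w hi1

theorem prefix_feasibility_general_general
    (C : ℕ)
    (w : ℕ → ℝ) (hw : ∀ i, 1 ≤ i → i ≤ C → 0 ≤ w i)
    (B : ℕ → ℝ) (hB : ∀ j, 1 ≤ j → 0 ≤ B j)
    (d : ℕ → ℕ)
    (hdmono : ∀ i i', 1 ≤ i → i < i' → i' ≤ C → d i < d i') :
    (∃ z : ℕ → ℕ → ℝ,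
      (∀ i j, 0 ≤ z i j) ∧
      (∀ i j, d i < j → z i j = 0) ∧
      (∀ j, 1 ≤ j → ∑ i ∈ Finset.Icc 1 C, z i j ≤ B j) ∧
      (∀ i ∈ Finset.Icc 1 C, ∑ j ∈ Finset.Icc 1 (d i), z i j = w i)) ↔
    (∀ i ∈ Finset.Icc 1 C,
      ∑ i' ∈ Finset.Icc 1 i, w i' ≤ ∑ j ∈ Finset.Icc 1 (d i), B j) := by
  have hd : MonotoneOn d (Icc 1 C) := fun i hi i' hi' hii' =>
    hii'.eq_or_lt.elim (fun h => h ▸ le_rfl)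
      fun h => (hdmono i i' (mem_Icc.mp hi).1 h (mem_Icc.mp hi').2).le
  exact ⟨fun ⟨_, hz, _, hzB, hzw⟩ _ hi => cumulativeSum_le_of_allocation hd hz hzB hzw hi,
    exists_allocation_of_cumulativeSum_le hw hB⟩

/-- Generalized prefix feasibility characterization with heterogeneous per-chunk
demands: chunks `1,…,C` with demands `w i ≥ 0` and strictly increasing deadlines
`d` can all be fully delivered (with per-slot budgets `B j`) iff for every
`i ∈ {1,…,C}` the total demand of the first `i` chunks is at most the cumulative
bandwidth `R(d(i)) = ∑_{j=1}^{d(i)} B j`. This covers variable-bit-rate chunks and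
the layered residual-bandwidth scheduling of the enhancement layers. -/
theorem prefix_feasibility_general
    (C : ℕ) (hC : 1 ≤ C)
    (w : ℕ → ℝ) (hw : ∀ i, 1 ≤ i → i ≤ C → 0 ≤ w i)
    (B : ℕ → ℝ) (hB : ∀ j, 1 ≤ j → 0 ≤ B j)
    (d : ℕ → ℕ)
    (hd1 : ∀ i, 1 ≤ i → i ≤ C → 1 ≤ d i)
    (hdmono : ∀ i i', 1 ≤ i → i < i' → i' ≤ C → d i < d i') :
    (∃ z : ℕ → ℕ → ℝ,
      (∀ i j, 0 ≤ z i j) ∧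
      (∀ i j, d i < j → z i j = 0) ∧
      (∀ j, 1 ≤ j → ∑ i ∈ Finset.Icc 1 C, z i j ≤ B j) ∧
      (∀ i ∈ Finset.Icc 1 C, ∑ j ∈ Finset.Icc 1 (d i), z i j = w i)) ↔
    (∀ i ∈ Finset.Icc 1 C,
      ∑ i' ∈ Finset.Icc 1 i, w i' ≤ ∑ j ∈ Finset.Icc 1 (d i), B j) :=
  prefix_feasibility_general_general C w hw B hB d hdmono
end

section
/- Let δ : {1,…,C} → ℕ be a nondecreasing stall profile such that the full set {1,…,C} is schedulable with deadlines d(i) = (i−1)·L + s + δ(i). Then the constant stall profile δ'(i) = δ(C) also makes {1,…,C} schedulable, with deadlines d'(i) = (i−1)·L + s + δ(C). (Hence for any feasible stall profile, moving the entire stall to the very beginning of playback is also feasible and leaves the total stall duration δ(C) unchanged; this justifies the no-skip forward scan bringing all stalls to the start.) -/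
/-- Moving the entire stall to the very beginning of playback is always feasible:
if a nondecreasing stall profile `δ` makes the full set `{1,…,C}` schedulable with
deadlines `d(i) = (i−1)L + s + δ(i)`, then the constant stall profile `δ'(i) = δ(C)`
also makes `{1,…,C}` schedulable, with deadlines `d'(i) = (i−1)L + s + δ(C)`; the
total stall duration `δ(C)` is unchanged. -/
theorem stalls_to_start_feasible
    (C : ℕ) (hC : 1 ≤ C) (Y : ℝ) (hY : 0 < Y)
    (B : ℕ → ℝ) (hB : ∀ j, 1 ≤ j → 0 ≤ B j)
    (L s : ℕ) (hL : 1 ≤ L) (hs : 1 ≤ s)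
    (δ : ℕ → ℕ)
    (hδ : ∀ i i', 1 ≤ i → i ≤ i' → i' ≤ C → δ i ≤ δ i')
    (hsched : Schedulable C Y B (fun i => (i - 1) * L + s + δ i) (Finset.Icc 1 C)) :
    Schedulable C Y B (fun i => (i - 1) * L + s + δ C) (Finset.Icc 1 C) := by
  obtain ⟨z, hpos, hzero, hbud, hsum⟩ := hsched
  have hle : ∀ i ∈ Finset.Icc 1 C,
      (i - 1) * L + s + δ i ≤ (i - 1) * L + s + δ C := by
    intro i hi
    rw [Finset.mem_Icc] at hi
    exact Nat.add_le_add_left (hδ i C hi.1 hi.2 le_rfl) _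
  refine ⟨z, hpos, ?_, hbud, ?_⟩
  · intro i j h
    by_cases hiS : i ∈ Finset.Icc 1 C
    · rcases h with h | h
      · exact absurd hiS h
      · exact hzero i j (Or.inr (lt_of_le_of_lt (hle i hiS) h))
    · exact hzero i j (Or.inl hiS)
  · intro i hi
    rw [← hsum i hi]
    symm
    apply Finset.sum_subset
    · exact Finset.Icc_subset_Icc le_rfl (hle i hi)
    · intro j hj hj'
      rw [Finset.mem_Icc] at hj hj'
      push_neg at hj'
      exact hzero i j (Or.inr (hj' hj.1))
end
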